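/- arXiv:2109.13443 — 4 statements merged into one kernel-verified Lean document; each statement's English description precedes it below -/
import Mathlib

section
/- Let (h, g; α, ▷) be a differential crossed module and V a real vector space. For any alternating k₁-linear map A₁ : V^{k₁} → g, alternating k₂-linear map A₂ : V^{k₂} → g, and alternating t-linear map B : V^t → h, one has (A₁ ∧^{[,]} A₂) ∧^▷ B = A₁ ∧^▷ (A₂ ∧^▷ B) + (−1)^{k₁ k₂ + 1} A₂ ∧^▷ (A₁ ∧^▷ B) as alternating (k₁+k₂+t)-linear maps V^{k₁+k₂+t} → h. -/
/-- A (k, l)-shuffle: a permutation of `Fin (k + l)` that is strictly increasing on the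
first `k` indices and on the last `l` indices. -/
def IsShuffle (k l : ℕ) (σ : Equiv.Perm (Fin (k + l))) : Prop :=
  (∀ i j : Fin k, i < j → σ (Fin.castAdd l i) < σ (Fin.castAdd l j)) ∧
  (∀ i j : Fin l, i < j → σ (Fin.natAdd k i) < σ (Fin.natAdd k j))

instance (k l : ℕ) (σ : Equiv.Perm (Fin (k + l))) : Decidable (IsShuffle k l σ) := by
  unfold IsShuffle; infer_instance

/-- The wedge product, via a bilinear pairing `μ : E → F → W`, of a `k`-form `A` and an
`l`-form `B` (given as functions on tuples of vectors):
`(A ∧^μ B)(v) = Σ_σ sgn(σ) μ(A(v_{σ(1)},…,v_{σ(k)}), B(v_{σ(k+1)},…,v_{σ(k+l)}))`,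
the sum ranging over `(k, l)`-shuffles `σ`. -/
def wedge {V E F W : Type*} [AddCommGroup W]
    (μ : E → F → W) {k l : ℕ}
    (A : (Fin k → V) → E) (B : (Fin l → V) → F) :
    (Fin (k + l) → V) → W :=
  fun v => ∑ σ : Equiv.Perm (Fin (k + l)),
    if IsShuffle k l σ then
      (Equiv.Perm.sign σ : ℤ) •
        μ (A fun i => v (σ (Fin.castAdd l i))) (B fun i => v (σ (Fin.natAdd k i)))
    else 0

/-- Identify `m`-forms with `n`-forms along an equality `m = n` of arities. -/
def reindex {V W : Type*} {m n : ℕ} (h : m = n) (f : (Fin m → V) → W) :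
    (Fin n → V) → W :=
  fun v => f fun i => v (Fin.cast h i)

/-!
Expanding the iterated wedges, all three terms become signed sums over `(k₁, k₂, t)`-shuffles
`τ`, i.e. permutations increasing on each of the three blocks. A `(k₁ + k₂, t)`-shuffle `σ`
followed by a `(k₁, k₂)`-shuffle `ρ` of the first `k₁ + k₂` slots is such a `τ = σ ∘ ρ`, and
conversely `ρ⁻¹` is recovered by sorting the values of `τ` on its first `k₁ + k₂` slots; likewise
on the last `k₂ + t` slots. Hence `(A₁ ∧ A₂) ∧ B` and `A₁ ∧ (A₂ ∧ B)` are both the triple wedge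
`wedge₃`, with trilinear pairings `act ⁅X₁, X₂⁆ Y` and `act X₁ (act X₂ Y)`. Exchanging the first
two blocks of a triple shuffle costs the sign `(-1) ^ (k₁ * k₂)` of a block rotation, so the
identity reduces to `act ⁅X₁, X₂⁆ = act X₁ ∘ act X₂ - act X₂ ∘ act X₁` termwise.
-/

open Equiv Equiv.Perm Finset

namespace Wedge

section Blocks

variable {m n : ℕ}

def extendLeft (n : ℕ) : Perm (Fin m) →* Perm (Fin (m + n)) :=
  finSumFinEquiv.permCongrHom.toMonoidHom.comp ((sumCongrHom _ _).comp (MonoidHom.inl _ _))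

def extendRight (m : ℕ) : Perm (Fin n) →* Perm (Fin (m + n)) :=
  finSumFinEquiv.permCongrHom.toMonoidHom.comp ((sumCongrHom _ _).comp (MonoidHom.inr _ _))

@[simp] lemma extendLeft_castAdd (ρ : Perm (Fin m)) (i : Fin m) :
    extendLeft n ρ (Fin.castAdd n i) = Fin.castAdd n (ρ i) := by
  simp [extendLeft, Equiv.permCongr_apply]

@[simp] lemma extendLeft_natAdd (ρ : Perm (Fin m)) (i : Fin n) :
    extendLeft n ρ (Fin.natAdd m i) = Fin.natAdd m i := by
  simp [extendLeft, Equiv.permCongr_apply]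

@[simp] lemma sign_extendLeft (ρ : Perm (Fin m)) : sign (extendLeft n ρ) = sign ρ := by
  simp [extendLeft]

@[simp] lemma extendRight_castAdd (ρ : Perm (Fin n)) (i : Fin m) :
    extendRight m ρ (Fin.castAdd n i) = Fin.castAdd n i := by
  simp [extendRight, Equiv.permCongr_apply]

@[simp] lemma extendRight_natAdd (ρ : Perm (Fin n)) (i : Fin n) :
    extendRight m ρ (Fin.natAdd m i) = Fin.natAdd m (ρ i) := by
  simp [extendRight, Equiv.permCongr_apply]

@[simp] lemma sign_extendRight (ρ : Perm (Fin n)) : sign (extendRight m ρ) = sign ρ := by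
  simp [extendRight]

section Sorting

variable {α : Type*} [LinearOrder α] {u : Fin n → α}

lemma strictMono_comp_sort (hu : Function.Injective u) : StrictMono (u ∘ Tuple.sort u) :=
  (Tuple.monotone_sort u).strictMono_of_injective (hu.comp (Equiv.injective _))

lemma eq_sort_of_monotone (hu : Function.Injective u) {π : Perm (Fin n)}
    (hπ : Monotone (u ∘ π)) : π = Tuple.sort u :=
  Equiv.ext fun x => hu (congrFun (Tuple.comp_sort_eq_comp_iff_monotone.mpr hπ) x)

lemma sort_inv_lt_sort_inv_iff (hu : Function.Injective u) {a b : Fin n} :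
    (Tuple.sort u)⁻¹ a < (Tuple.sort u)⁻¹ b ↔ u a < u b := by
  rw [← (strictMono_comp_sort hu).lt_iff_lt]
  simp

end Sorting

def sortLeft (τ : Perm (Fin (m + n))) : Perm (Fin m) :=
  Tuple.sort fun i => τ (Fin.castAdd n i)

def sortRight (τ : Perm (Fin (m + n))) : Perm (Fin n) :=
  Tuple.sort fun i => τ (Fin.natAdd m i)

lemma injective_castAdd_comp (τ : Perm (Fin (m + n))) :
    Function.Injective fun i => τ (Fin.castAdd n i) :=
  τ.injective.comp (Fin.castAdd_injective _ _)

lemma injective_natAdd_comp (τ : Perm (Fin (m + n))) :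
    Function.Injective fun i => τ (Fin.natAdd m i) :=
  τ.injective.comp (Fin.natAdd_injective _ _)

lemma sortLeft_mul_extendLeft {σ : Perm (Fin (m + n))} (hσ : IsShuffle m n σ)
    (ρ : Perm (Fin m)) : sortLeft (σ * extendLeft n ρ) = ρ⁻¹ := by
  refine (eq_sort_of_monotone (injective_castAdd_comp _) ?_).symm
  convert (show StrictMono fun i => σ (Fin.castAdd n i) from hσ.1).monotone using 1
  ext i
  simp

lemma sortRight_mul_extendRight {σ : Perm (Fin (m + n))} (hσ : IsShuffle m n σ)
    (ρ : Perm (Fin n)) : sortRight (σ * extendRight m ρ) = ρ⁻¹ := by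
  refine (eq_sort_of_monotone (injective_natAdd_comp _) ?_).symm
  convert (show StrictMono fun i => σ (Fin.natAdd m i) from hσ.2).monotone using 1
  ext i
  simp

end Blocks

def IsShuffle₃ (k₁ k₂ t : ℕ) (τ : Perm (Fin (k₁ + k₂ + t))) : Prop :=
  StrictMono (fun i : Fin k₁ => τ (Fin.castAdd t (Fin.castAdd k₂ i))) ∧
  StrictMono (fun i : Fin k₂ => τ (Fin.castAdd t (Fin.natAdd k₁ i))) ∧
  StrictMono (fun i : Fin t => τ (Fin.natAdd (k₁ + k₂) i))

instance (k₁ k₂ t : ℕ) : DecidablePred (IsShuffle₃ k₁ k₂ t) := fun τ => by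
  unfold IsShuffle₃ StrictMono; infer_instance

def wedge₃ {V E₁ E₂ E₃ W : Type*} [AddCommGroup W] (ν : E₁ → E₂ → E₃ → W) {k₁ k₂ t : ℕ}
    (A₁ : (Fin k₁ → V) → E₁) (A₂ : (Fin k₂ → V) → E₂) (B : (Fin t → V) → E₃) :
    (Fin (k₁ + k₂ + t) → V) → W :=
  fun v => ∑ τ with IsShuffle₃ k₁ k₂ t τ,
    (sign τ : ℤ) • ν (A₁ fun i => v (τ (Fin.castAdd t (Fin.castAdd k₂ i))))
      (A₂ fun i => v (τ (Fin.castAdd t (Fin.natAdd k₁ i))))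
      (B fun i => v (τ (Fin.natAdd (k₁ + k₂) i)))

lemma wedge₃_sub {V E₁ E₂ E₃ W : Type*} [AddCommGroup W] (ν ν' : E₁ → E₂ → E₃ → W)
    {k₁ k₂ t : ℕ} (A₁ : (Fin k₁ → V) → E₁) (A₂ : (Fin k₂ → V) → E₂) (B : (Fin t → V) → E₃) :
    wedge₃ (fun x y z => ν x y z - ν' x y z) A₁ A₂ B = wedge₃ ν A₁ A₂ B - wedge₃ ν' A₁ A₂ B := by
  funext v
  simp [wedge₃, smul_sub, sum_sub_distrib]

lemma wedge_apply {V E F W : Type*} [AddCommGroup W] (μ : E → F → W) {k l : ℕ}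
    (A : (Fin k → V) → E) (B : (Fin l → V) → F) (v : Fin (k + l) → V) :
    wedge μ A B v = ∑ σ with IsShuffle k l σ,
      (sign σ : ℤ) • μ (A fun i => v (σ (Fin.castAdd l i))) (B fun i => v (σ (Fin.natAdd k i))) :=
  (sum_filter _ _).symm

variable {k₁ k₂ t : ℕ}

section LeftAssociation

lemma isShuffle₃_mul_extendLeft {σ : Perm (Fin (k₁ + k₂ + t))} {ρ : Perm (Fin (k₁ + k₂))}
    (hσ : IsShuffle (k₁ + k₂) t σ) (hρ : IsShuffle k₁ k₂ ρ) :
    IsShuffle₃ k₁ k₂ t (σ * extendLeft t ρ) := by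
  refine ⟨fun i j hij => ?_, fun i j hij => ?_, fun i j hij => ?_⟩ <;>
    simp only [Perm.mul_apply, extendLeft_castAdd, extendLeft_natAdd]
  exacts [hσ.1 _ _ (hρ.1 i j hij), hσ.1 _ _ (hρ.2 i j hij), hσ.2 i j hij]

lemma isShuffle_mul_extendLeft_sortLeft {τ : Perm (Fin (k₁ + k₂ + t))}
    (hτ : IsShuffle₃ k₁ k₂ t τ) : IsShuffle (k₁ + k₂) t (τ * extendLeft t (sortLeft τ)) := by
  refine ⟨fun i j hij => ?_, fun i j hij => ?_⟩ <;>
    simp only [Perm.mul_apply, extendLeft_castAdd, extendLeft_natAdd]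
  exacts [strictMono_comp_sort (injective_castAdd_comp τ) hij, hτ.2.2 hij]

lemma isShuffle_sortLeft_inv {τ : Perm (Fin (k₁ + k₂ + t))} (hτ : IsShuffle₃ k₁ k₂ t τ) :
    IsShuffle k₁ k₂ (sortLeft τ)⁻¹ :=
  ⟨fun _ _ hij => (sort_inv_lt_sort_inv_iff (injective_castAdd_comp τ)).2 (hτ.1 hij),
    fun _ _ hij => (sort_inv_lt_sort_inv_iff (injective_castAdd_comp τ)).2 (hτ.2.1 hij)⟩

lemma sum_isShuffle_mul_extendLeft {M : Type*} [AddCommMonoid M]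
    (F : Perm (Fin (k₁ + k₂ + t)) → M) :
    ∑ σ with IsShuffle (k₁ + k₂) t σ, ∑ ρ with IsShuffle k₁ k₂ ρ, F (σ * extendLeft t ρ) =
      ∑ τ with IsShuffle₃ k₁ k₂ t τ, F τ := by
  rw [← sum_product']
  refine sum_nbij' (fun p => p.1 * extendLeft t p.2)
    (fun τ => (τ * extendLeft t (sortLeft τ), (sortLeft τ)⁻¹)) ?_ ?_ ?_ ?_ fun _ _ => rfl
  · simp only [mem_product, mem_filter, mem_univ, true_and, and_imp, Prod.forall]
    exact fun σ ρ hσ hρ => isShuffle₃_mul_extendLeft hσ hρ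
  · simp only [mem_product, mem_filter, mem_univ, true_and]
    exact fun τ hτ => ⟨isShuffle_mul_extendLeft_sortLeft hτ, isShuffle_sortLeft_inv hτ⟩
  · simp only [mem_product, mem_filter, mem_univ, true_and, and_imp, Prod.forall]
    intro σ ρ hσ _
    simp [sortLeft_mul_extendLeft hσ]
  · intro τ _
    simp

theorem wedge_wedge_left {R V E₁ E₂ E F W : Type*} [CommSemiring R] [AddCommGroup E]
    [Module R E] [AddCommMonoid F] [Module R F] [AddCommGroup W] [Module R W]
    (μ : E →ₗ[R] F →ₗ[R] W) (μ' : E₁ → E₂ → E)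
    (A₁ : (Fin k₁ → V) → E₁) (A₂ : (Fin k₂ → V) → E₂) (B : (Fin t → V) → F) :
    wedge (fun x y => μ x y) (wedge μ' A₁ A₂) B = wedge₃ (fun x y z => μ (μ' x y) z) A₁ A₂ B := by
  funext v
  rw [wedge₃, ← sum_isShuffle_mul_extendLeft, wedge_apply]
  refine sum_congr rfl fun σ _ => ?_
  rw [wedge_apply, ← LinearMap.flip_apply, map_sum, smul_sum]
  refine sum_congr rfl fun ρ _ => ?_
  simp [map_zsmul, smul_smul, mul_comm]

end LeftAssociation

section RightAssociation

@[simp] lemma cast_castAdd_castAdd (h : k₁ + k₂ + t = k₁ + (k₂ + t)) (i : Fin k₁) :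
    Fin.cast h (Fin.castAdd t (Fin.castAdd k₂ i)) = Fin.castAdd (k₂ + t) i :=
  Fin.ext rfl

@[simp] lemma cast_castAdd_natAdd (h : k₁ + k₂ + t = k₁ + (k₂ + t)) (i : Fin k₂) :
    Fin.cast h (Fin.castAdd t (Fin.natAdd k₁ i)) = Fin.natAdd k₁ (Fin.castAdd t i) :=
  Fin.ext rfl

@[simp] lemma cast_natAdd (h : k₁ + k₂ + t = k₁ + (k₂ + t)) (i : Fin t) :
    Fin.cast h (Fin.natAdd (k₁ + k₂) i) = Fin.natAdd k₁ (Fin.natAdd k₂ i) :=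
  Fin.ext (by simp [add_assoc])

def assocPerm (k₁ k₂ t : ℕ) : Perm (Fin (k₁ + (k₂ + t))) ≃ Perm (Fin (k₁ + k₂ + t)) :=
  (finCongr (add_assoc k₁ k₂ t).symm).permCongr

lemma isShuffle₃_assocPerm_iff (τ : Perm (Fin (k₁ + (k₂ + t)))) :
    IsShuffle₃ k₁ k₂ t (assocPerm k₁ k₂ t τ) ↔
      StrictMono (fun i : Fin k₁ => τ (Fin.castAdd (k₂ + t) i)) ∧
      StrictMono (fun i : Fin k₂ => τ (Fin.natAdd k₁ (Fin.castAdd t i))) ∧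
      StrictMono (fun i : Fin t => τ (Fin.natAdd k₁ (Fin.natAdd k₂ i))) := by
  simp [assocPerm, IsShuffle₃, StrictMono, permCongr_apply, Fin.cast_lt_cast]

lemma isShuffle₃_assocPerm_mul_extendRight {σ : Perm (Fin (k₁ + (k₂ + t)))}
    {ρ : Perm (Fin (k₂ + t))} (hσ : IsShuffle k₁ (k₂ + t) σ) (hρ : IsShuffle k₂ t ρ) :
    IsShuffle₃ k₁ k₂ t (assocPerm k₁ k₂ t (σ * extendRight k₁ ρ)) := by
  rw [isShuffle₃_assocPerm_iff]
  refine ⟨fun i j hij => ?_, fun i j hij => ?_, fun i j hij => ?_⟩ <;>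
    simp only [Perm.mul_apply, extendRight_castAdd, extendRight_natAdd]
  exacts [hσ.1 i j hij, hσ.2 _ _ (hρ.1 i j hij), hσ.2 _ _ (hρ.2 i j hij)]

lemma isShuffle_mul_extendRight_sortRight {τ : Perm (Fin (k₁ + (k₂ + t)))}
    (hτ : IsShuffle₃ k₁ k₂ t (assocPerm k₁ k₂ t τ)) :
    IsShuffle k₁ (k₂ + t) (τ * extendRight k₁ (sortRight τ)) := by
  rw [isShuffle₃_assocPerm_iff] at hτ
  refine ⟨fun i j hij => ?_, fun i j hij => ?_⟩ <;>
    simp only [Perm.mul_apply, extendRight_castAdd, extendRight_natAdd]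
  exacts [hτ.1 hij, strictMono_comp_sort (injective_natAdd_comp τ) hij]

lemma isShuffle_sortRight_inv {τ : Perm (Fin (k₁ + (k₂ + t)))}
    (hτ : IsShuffle₃ k₁ k₂ t (assocPerm k₁ k₂ t τ)) : IsShuffle k₂ t (sortRight τ)⁻¹ := by
  rw [isShuffle₃_assocPerm_iff] at hτ
  exact ⟨fun _ _ hij => (sort_inv_lt_sort_inv_iff (injective_natAdd_comp τ)).2 (hτ.2.1 hij),
    fun _ _ hij => (sort_inv_lt_sort_inv_iff (injective_natAdd_comp τ)).2 (hτ.2.2 hij)⟩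

lemma sum_isShuffle_mul_extendRight {M : Type*} [AddCommMonoid M]
    (F : Perm (Fin (k₁ + k₂ + t)) → M) :
    ∑ σ with IsShuffle k₁ (k₂ + t) σ, ∑ ρ with IsShuffle k₂ t ρ,
        F (assocPerm k₁ k₂ t (σ * extendRight k₁ ρ)) =
      ∑ τ with IsShuffle₃ k₁ k₂ t τ, F τ := by
  rw [← sum_product']
  refine sum_nbij' (fun p => assocPerm k₁ k₂ t (p.1 * extendRight k₁ p.2))
    (fun τ =>
      let τ' := (assocPerm k₁ k₂ t).symm τ
      (τ' * extendRight k₁ (sortRight τ'), (sortRight τ')⁻¹)) ?_ ?_ ?_ ?_ fun _ _ => rfl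
  · simp only [mem_product, mem_filter, mem_univ, true_and, and_imp, Prod.forall]
    exact fun σ ρ hσ hρ => isShuffle₃_assocPerm_mul_extendRight hσ hρ
  · simp only [mem_product, mem_filter, mem_univ, true_and]
    intro τ hτ
    rw [← (assocPerm k₁ k₂ t).apply_symm_apply τ] at hτ
    exact ⟨isShuffle_mul_extendRight_sortRight hτ, isShuffle_sortRight_inv hτ⟩
  · simp only [mem_product, mem_filter, mem_univ, true_and, and_imp, Prod.forall]
    intro σ ρ hσ _
    simp only [Equiv.symm_apply_apply, sortRight_mul_extendRight hσ, map_inv,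
      mul_inv_cancel_right, inv_inv]
  · intro τ _
    simp only [map_inv, mul_inv_cancel_right, Equiv.apply_symm_apply]

theorem wedge_wedge_right {R V E₁ E₂ E₃ F W : Type*} [CommSemiring R] [AddCommGroup F]
    [Module R F] [AddCommMonoid E₁] [Module R E₁] [AddCommGroup W] [Module R W]
    (μ : E₁ →ₗ[R] F →ₗ[R] W) (μ' : E₂ → E₃ → F)
    (A₁ : (Fin k₁ → V) → E₁) (A₂ : (Fin k₂ → V) → E₂) (B : (Fin t → V) → E₃) :
    reindex (add_assoc k₁ k₂ t).symm (wedge (fun x y => μ x y) A₁ (wedge μ' A₂ B)) =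
      wedge₃ (fun x y z => μ x (μ' y z)) A₁ A₂ B := by
  funext v
  rw [wedge₃, ← sum_isShuffle_mul_extendRight, reindex, wedge_apply]
  refine sum_congr rfl fun σ _ => ?_
  rw [wedge_apply, map_sum, smul_sum]
  refine sum_congr rfl fun ρ _ => ?_
  simp [assocPerm, map_zsmul, smul_smul, mul_comm, permCongr_apply]

end RightAssociation

section Swap

open Fin.NatCast in
lemma finRotate_pow_apply {n : ℕ} (m : ℕ) (x : Fin (n + 1)) :
    (finRotate (n + 1) ^ m) x = x + (m : Fin (n + 1)) := by
  induction m with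
  | zero => simp
  | succ m ih => rw [pow_succ', Perm.mul_apply, finRotate_apply, ih, Nat.cast_succ, add_assoc]

lemma val_finRotate_pow {n : ℕ} (m : ℕ) (x : Fin n) : ((finRotate n ^ m) x : ℕ) = (x + m) % n := by
  rcases n with _ | n
  · exact x.elim0
  · simp [finRotate_pow_apply, Fin.val_add, Fin.val_natCast, Nat.add_mod_mod]

def rotateBlocks (k₁ k₂ : ℕ) : Perm (Fin (k₁ + k₂)) := finRotate (k₁ + k₂) ^ k₂

lemma rotateBlocks_castAdd (i : Fin k₁) :
    rotateBlocks k₁ k₂ (Fin.castAdd k₂ i) = Fin.cast (add_comm k₂ k₁) (Fin.natAdd k₂ i) := by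
  ext
  rw [rotateBlocks, val_finRotate_pow]
  simpa [add_comm] using Nat.mod_eq_of_lt (by omega)

lemma rotateBlocks_natAdd (i : Fin k₂) :
    rotateBlocks k₁ k₂ (Fin.natAdd k₁ i) = Fin.cast (add_comm k₂ k₁) (Fin.castAdd k₁ i) := by
  ext
  rw [rotateBlocks, val_finRotate_pow]
  simpa [add_right_comm] using Nat.mod_eq_of_lt (by omega)

lemma sign_rotateBlocks (k₁ k₂ : ℕ) : sign (rotateBlocks k₁ k₂) = (-1) ^ (k₁ * k₂) := by
  rcases k₂ with _ | k₂
  · simp [rotateBlocks]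
  · rw [rotateBlocks, map_pow, sign_finRotate, ← pow_mul, show k₁ + (k₂ + 1) - 1 = k₁ + k₂ by omega,
      show (k₁ + k₂) * (k₂ + 1) = k₁ * (k₂ + 1) + k₂ * (k₂ + 1) by ring, pow_add,
      (Nat.even_mul_succ_self k₂).neg_one_pow, mul_one]

def swapBlocks (k₁ k₂ t : ℕ) : Perm (Fin (k₂ + k₁ + t)) ≃ Perm (Fin (k₁ + k₂ + t)) :=
  (finCongr (by rw [add_comm k₂ k₁])).permCongr.trans
    (Equiv.mulRight (extendLeft t (rotateBlocks k₁ k₂)))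

lemma swapBlocks_apply_castAdd_castAdd (τ : Perm (Fin (k₂ + k₁ + t))) (i : Fin k₁) :
    swapBlocks k₁ k₂ t τ (Fin.castAdd t (Fin.castAdd k₂ i)) =
      Fin.cast (by rw [add_comm k₂ k₁]) (τ (Fin.castAdd t (Fin.natAdd k₂ i))) := by
  simp only [swapBlocks, trans_apply, permCongr_apply, coe_mulRight, Perm.mul_apply,
    extendLeft_castAdd, rotateBlocks_castAdd, finCongr_apply]
  congr 2

lemma swapBlocks_apply_castAdd_natAdd (τ : Perm (Fin (k₂ + k₁ + t))) (i : Fin k₂) :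
    swapBlocks k₁ k₂ t τ (Fin.castAdd t (Fin.natAdd k₁ i)) =
      Fin.cast (by rw [add_comm k₂ k₁]) (τ (Fin.castAdd t (Fin.castAdd k₁ i))) := by
  simp only [swapBlocks, trans_apply, permCongr_apply, coe_mulRight, Perm.mul_apply,
    extendLeft_castAdd, rotateBlocks_natAdd, finCongr_apply]
  congr 2

lemma swapBlocks_apply_natAdd (τ : Perm (Fin (k₂ + k₁ + t))) (i : Fin t) :
    swapBlocks k₁ k₂ t τ (Fin.natAdd (k₁ + k₂) i) =
      Fin.cast (by rw [add_comm k₂ k₁]) (τ (Fin.natAdd (k₂ + k₁) i)) := by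
  simp only [swapBlocks, trans_apply, permCongr_apply, coe_mulRight, Perm.mul_apply,
    extendLeft_natAdd, finCongr_apply]
  congr 2
  ext
  simp [add_comm]

lemma sign_swapBlocks (τ : Perm (Fin (k₂ + k₁ + t))) :
    sign (swapBlocks k₁ k₂ t τ) = sign τ * (-1) ^ (k₁ * k₂) := by
  simp [swapBlocks, sign_rotateBlocks]

lemma isShuffle₃_swapBlocks_iff (τ : Perm (Fin (k₂ + k₁ + t))) :
    IsShuffle₃ k₁ k₂ t (swapBlocks k₁ k₂ t τ) ↔ IsShuffle₃ k₂ k₁ t τ := by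
  simp only [IsShuffle₃, StrictMono, swapBlocks_apply_castAdd_castAdd,
    swapBlocks_apply_castAdd_natAdd, swapBlocks_apply_natAdd, Fin.cast_lt_cast]
  tauto

theorem wedge₃_swap {V E₁ E₂ E₃ W : Type*} [AddCommGroup W] (ν : E₂ → E₁ → E₃ → W)
    (A₁ : (Fin k₁ → V) → E₁) (A₂ : (Fin k₂ → V) → E₂) (B : (Fin t → V) → E₃) :
    reindex (by rw [add_comm k₂ k₁]) (wedge₃ ν A₂ A₁ B) =
      ((-1 : ℤ) ^ (k₁ * k₂)) • wedge₃ (fun x y z => ν y x z) A₁ A₂ B := by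
  funext v
  rw [reindex, wedge₃, Pi.smul_apply, wedge₃, smul_sum]
  refine sum_equiv (swapBlocks k₁ k₂ t) (by simp [isShuffle₃_swapBlocks_iff]) fun τ _ => ?_
  simp [swapBlocks_apply_castAdd_castAdd, swapBlocks_apply_castAdd_natAdd,
    swapBlocks_apply_natAdd, sign_swapBlocks, smul_smul]
  rw [mul_left_comm, ← pow_add, Even.neg_one_pow ⟨_, rfl⟩, mul_one]

end Swap

end Wedge

theorem bracket_wedge_act {g h V : Type*} [LieRing g] [LieAlgebra ℝ g]
    [LieRing h] [LieAlgebra ℝ h] [AddCommGroup V] [Module ℝ V]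
    (act : g →ₗ[ℝ] h →ₗ[ℝ] h)
    (act_lie : ∀ (X₁ X₂ : g) (Y : h),
      act ⁅X₁, X₂⁆ Y = act X₁ (act X₂ Y) - act X₂ (act X₁ Y))
    {k₁ k₂ t : ℕ} (A₁ : AlternatingMap ℝ V g (Fin k₁))
    (A₂ : AlternatingMap ℝ V g (Fin k₂)) (B : AlternatingMap ℝ V h (Fin t)) :
    wedge (fun X Y => act X Y) (wedge (fun X X' : g => ⁅X, X'⁆) ⇑A₁ ⇑A₂) ⇑B =
      reindex (by omega : k₁ + (k₂ + t) = k₁ + k₂ + t)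
        (wedge (fun X Y => act X Y) ⇑A₁ (wedge (fun X Y => act X Y) ⇑A₂ ⇑B))
      + ((-1 : ℝ) ^ (k₁ * k₂ + 1)) •
        reindex (by omega : k₂ + (k₁ + t) = k₁ + k₂ + t)
          (wedge (fun X Y => act X Y) ⇑A₂ (wedge (fun X Y => act X Y) ⇑A₁ ⇑B)) := by
  have hlie : (fun (x y : g) (z : h) => act ⁅x, y⁆ z) =
      fun x y z => act x (act y z) - act y (act x z) := by
    funext x y z
    exact act_lie x y z
  have hswap : reindex (by omega : k₂ + (k₁ + t) = k₁ + k₂ + t)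
      (wedge (fun X Y => act X Y) ⇑A₂ (wedge (fun X Y => act X Y) ⇑A₁ ⇑B)) =
        ((-1 : ℤ) ^ (k₁ * k₂)) • Wedge.wedge₃ (fun x y z => act y (act x z)) ⇑A₁ ⇑A₂ ⇑B := by
    rw [← Wedge.wedge₃_swap, ← Wedge.wedge_wedge_right]
    rfl
  rw [hswap, Wedge.wedge_wedge_left, Wedge.wedge_wedge_right, hlie, Wedge.wedge₃_sub,
    sub_eq_add_neg]
  congr 1
  rw [← Int.cast_smul_eq_zsmul ℝ, smul_smul]
  push_cast
  rw [pow_succ, mul_right_comm, ← pow_add, Even.neg_one_pow ⟨_, rfl⟩, one_mul, neg_one_smul]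
end

section
/- Let g, h, l be real vector spaces, ▷ : g × h → h and ▷ : g × l → l bilinear actions, and {,} : h × h → l a bilinear map satisfying the g-equivariance X ▷ {Y₁, Y₂} = {X ▷ Y₁, Y₂} + {Y₁, X ▷ Y₂} for all X ∈ g, Y₁, Y₂ ∈ h. Then for a real vector space V, any alternating k-linear map A : V^k → g, alternating t₁-linear map B₁ : V^{t₁} → h, and alternating t₂-linear map B₂ : V^{t₂} → h, one has A ∧^▷ (B₁ ∧^{{,}} B₂) = (A ∧^▷ B₁) ∧^{{,}} B₂ + (−1)^{k t₁} B₁ ∧^{{,}} (A ∧^▷ B₂) as alternating (k+t₁+t₂)-linear maps V^{k+t₁+t₂} → l. -/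
/-!
Multiplying the wedge product of a `k`-form and an `l`-form by `k! l!` turns its sum over
shuffles into the full antisymmetrization over `Perm (Fin (k + l))` of the block product
`μ (A (v₁, …, v_k)) (B (v_{k+1}, …, v_{k+l}))`, because every permutation is uniquely a shuffle
followed by a permutation of each block. Iterating, `k! t₁! t₂!` times each of the three iterated
wedges is the antisymmetrization of one expression in `A`, `B₁`, `B₂`. The equivariance of `{,}`
splits the integrand on the left into the two integrands on the right, the second one only after
moving the block of `A` past the block of `B₁`, a permutation of sign `(-1)^(k t₁)`. The
factorials cancel since real vector spaces are torsion-free.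
-/

open Equiv
open scoped Nat

namespace Equiv.Perm

variable {k l : ℕ}

def blockPerm (p : Perm (Fin k)) (q : Perm (Fin l)) : Perm (Fin (k + l)) :=
  finSumFinEquiv.permCongr (p.sumCongr q)

@[simp]
lemma blockPerm_castAdd (p : Perm (Fin k)) (q : Perm (Fin l)) (i : Fin k) :
    blockPerm p q (Fin.castAdd l i) = Fin.castAdd l (p i) := by
  simp [blockPerm, permCongr_apply]

@[simp]
lemma blockPerm_natAdd (p : Perm (Fin k)) (q : Perm (Fin l)) (j : Fin l) :
    blockPerm p q (Fin.natAdd k j) = Fin.natAdd k (q j) := by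
  simp [blockPerm, permCongr_apply]

@[simp]
lemma sign_blockPerm (p : Perm (Fin k)) (q : Perm (Fin l)) :
    sign (blockPerm p q) = sign p * sign q := by
  rw [blockPerm, sign_permCongr, sign_sumCongr]

lemma blockPerm_mul (p p' : Perm (Fin k)) (q q' : Perm (Fin l)) :
    blockPerm p q * blockPerm p' q' = blockPerm (p * p') (q * q') := by
  rw [blockPerm, blockPerm, blockPerm, ← sumCongr_mul, permCongr_mul]

@[simp]
lemma blockPerm_one : blockPerm (1 : Perm (Fin k)) (1 : Perm (Fin l)) = 1 := by
  rw [blockPerm, sumCongr_one]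
  exact finSumFinEquiv.permCongrHom.map_one

lemma eq_one_of_strictMono_comp {n : ℕ} {α : Type*} [Preorder α] {f : Fin n → α}
    {p : Perm (Fin n)} (hf : StrictMono f) (hfp : StrictMono (f ∘ p)) : p = 1 :=
  Equiv.ext fun i => congrFun (StrictMono.eq_id fun _ _ h => hf.lt_iff_lt.1 (hfp h)) i

end Equiv.Perm

open Equiv.Perm

lemma IsShuffle.eq_of_mul_blockPerm {k l : ℕ} {σ σ' : Perm (Fin (k + l))}
    (hσ : IsShuffle k l σ) (hσ' : IsShuffle k l σ') {p p' : Perm (Fin k)} {q q' : Perm (Fin l)}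
    (h : σ * blockPerm p q = σ' * blockPerm p' q') : σ = σ' ∧ p = p' ∧ q = q' := by
  have hleft : σ' ∘ Fin.castAdd l ∘ (p' * p⁻¹) = σ ∘ Fin.castAdd l := by
    funext i; simpa using congrArg (· (Fin.castAdd l (p⁻¹ i))) h.symm
  have hright : σ' ∘ Fin.natAdd k ∘ (q' * q⁻¹) = σ ∘ Fin.natAdd k := by
    funext j; simpa using congrArg (· (Fin.natAdd k (q⁻¹ j))) h.symm
  have hp : p' * p⁻¹ = 1 :=
    eq_one_of_strictMono_comp (f := σ' ∘ Fin.castAdd l) hσ'.1 (hleft ▸ hσ.1)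
  have hq : q' * q⁻¹ = 1 :=
    eq_one_of_strictMono_comp (f := σ' ∘ Fin.natAdd k) hσ'.2 (hright ▸ hσ.2)
  rw [mul_inv_eq_one] at hp hq
  subst hp hq
  exact ⟨mul_right_cancel h, rfl, rfl⟩

lemma isShuffle_mul_blockPerm_sort {k l : ℕ} (π : Perm (Fin (k + l))) :
    IsShuffle k l
      (π * blockPerm (Tuple.sort (π ∘ Fin.castAdd l)) (Tuple.sort (π ∘ Fin.natAdd k))) := by
  constructor
  · intro i j hij
    simpa using ((Tuple.monotone_sort _).strictMono_of_injective
      ((π.injective.comp (Fin.castAdd_injective k l)).comp (Equiv.injective _))) hij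
  · intro i j hij
    simpa using ((Tuple.monotone_sort _).strictMono_of_injective
      ((π.injective.comp (Fin.natAdd_injective l k)).comp (Equiv.injective _))) hij

lemma bijective_shuffle_mul_blockPerm (k l : ℕ) :
    Function.Bijective fun x : {σ // IsShuffle k l σ} × Perm (Fin k) × Perm (Fin l) =>
      x.1.1 * blockPerm x.2.1 x.2.2 := by
  refine ⟨fun ⟨σ, p, q⟩ ⟨σ', p', q'⟩ h => ?_, fun π => ?_⟩
  · obtain ⟨hσ, rfl, rfl⟩ := σ.2.eq_of_mul_blockPerm σ'.2 h
    rw [Subtype.ext hσ]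
  · refine ⟨⟨⟨_, isShuffle_mul_blockPerm_sort π⟩, (Tuple.sort (π ∘ Fin.castAdd l))⁻¹,
      (Tuple.sort (π ∘ Fin.natAdd k))⁻¹⟩, ?_⟩
    simp [mul_assoc, blockPerm_mul]

lemma sum_perm_eq_sum_shuffle {k l : ℕ} {M : Type*} [AddCommMonoid M]
    (f : Perm (Fin (k + l)) → M) :
    ∑ π, f π = ∑ σ, if IsShuffle k l σ then ∑ p, ∑ q, f (σ * blockPerm p q) else 0 := by
  rw [← Fintype.sum_bijective _ (bijective_shuffle_mul_blockPerm k l) _ f fun _ => rfl,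
    ← Finset.sum_filter]
  simp only [Fintype.sum_prod_type]
  rw [Finset.sum_subtype _ fun σ => Finset.mem_filter_univ (p := IsShuffle k l) σ]

section Antisymmetrize

variable {V W : Type*} [AddCommGroup W] {n : ℕ}

def IsSkewSymmetric (f : (Fin n → V) → W) : Prop :=
  ∀ (v : Fin n → V) (σ : Perm (Fin n)), f (fun i => v (σ i)) = (sign σ : ℤ) • f v

lemma AlternatingMap.isSkewSymmetric {R M N : Type*} [Semiring R] [AddCommMonoid M]
    [Module R M] [AddCommGroup N] [Module R N] (f : M [⋀^Fin n]→ₗ[R] N) :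
    IsSkewSymmetric ⇑f := fun v σ => by
  simpa [Units.smul_def, Function.comp_def] using f.map_perm v σ

lemma sign_smul_sign_smul {α : Type*} [DecidableEq α] [Fintype α] (σ : Perm α) (x : W) :
    (sign σ : ℤ) • (sign σ : ℤ) • x = x := by
  rw [smul_smul, Int.units_coe_mul_self, one_smul]

def antisymmetrize : ((Fin n → V) → W) →+ ((Fin n → V) → W) where
  toFun f v := ∑ σ : Perm (Fin n), (sign σ : ℤ) • f (fun i => v (σ i))
  map_zero' := by ext; simp
  map_add' f g := by ext; simp [Finset.sum_add_distrib]

lemma antisymmetrize_apply (f : (Fin n → V) → W) (v : Fin n → V) :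
    antisymmetrize f v = ∑ σ : Perm (Fin n), (sign σ : ℤ) • f (fun i => v (σ i)) :=
  rfl

lemma isSkewSymmetric_antisymmetrize (f : (Fin n → V) → W) :
    IsSkewSymmetric (antisymmetrize f) := fun v τ => by
  simp only [antisymmetrize_apply, Finset.smul_sum]
  refine Fintype.sum_equiv (Equiv.mulLeft τ) _ _ fun σ => ?_
  simp [smul_smul, ← mul_assoc, Int.units_coe_mul_self]

lemma antisymmetrize_comp_perm (f : (Fin n → V) → W) (τ : Perm (Fin n)) :
    antisymmetrize (fun v => f (fun i => v (τ i))) = (sign τ : ℤ) • antisymmetrize f := by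
  ext v
  simp only [antisymmetrize_apply, Pi.smul_apply, Finset.smul_sum]
  refine Fintype.sum_equiv (Equiv.mulRight τ) _ _ fun σ => ?_
  simp [smul_smul, mul_comm, ← mul_assoc, Int.units_coe_mul_self]

end Antisymmetrize

section BlockProd

variable {V E F W : Type*} {k l : ℕ}

def blockProd (μ : E → F → W) (A : (Fin k → V) → E) (B : (Fin l → V) → F) :
    (Fin (k + l) → V) → W :=
  fun v => μ (A fun i => v (Fin.castAdd l i)) (B fun j => v (Fin.natAdd k j))

lemma wedge_apply_eq_sum_blockProd [AddCommGroup W] (μ : E → F → W) (A : (Fin k → V) → E)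
    (B : (Fin l → V) → F) (v : Fin (k + l) → V) :
    wedge μ A B v = ∑ σ, if IsShuffle k l σ then
      (sign σ : ℤ) • blockProd μ A B (fun i => v (σ i)) else 0 :=
  rfl

variable {R : Type*} [CommSemiring R] [AddCommGroup E] [Module R E] [AddCommGroup F]
  [Module R F] [AddCommGroup W] [Module R W] (μ : E →ₗ[R] F →ₗ[R] W)

lemma blockProd_comp_blockPerm {A : (Fin k → V) → E} {B : (Fin l → V) → F}
    (hA : IsSkewSymmetric A) (hB : IsSkewSymmetric B) (p : Perm (Fin k)) (q : Perm (Fin l))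
    (v : Fin (k + l) → V) :
    blockProd (fun x y => μ x y) A B (fun i => v (blockPerm p q i)) =
      (sign (blockPerm p q) : ℤ) • blockProd (fun x y => μ x y) A B v := by
  simp only [blockProd, blockPerm_castAdd, blockPerm_natAdd]
  rw [hA (fun i => v (Fin.castAdd l i)) p, hB (fun j => v (Fin.natAdd k j)) q, map_zsmul,
    map_zsmul, LinearMap.smul_apply, smul_comm, sign_blockPerm, Units.val_mul, mul_smul]

theorem factorial_mul_factorial_smul_wedge {A : (Fin k → V) → E} {B : (Fin l → V) → F}
    (hA : IsSkewSymmetric A) (hB : IsSkewSymmetric B) :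
    (k ! * l !) • wedge (fun x y => μ x y) A B =
      antisymmetrize (blockProd (fun x y => μ x y) A B) := by
  ext v
  rw [Pi.smul_apply, antisymmetrize_apply, sum_perm_eq_sum_shuffle,
    wedge_apply_eq_sum_blockProd, Finset.smul_sum]
  refine Finset.sum_congr rfl fun σ _ => ?_
  split_ifs
  · have hblock : ∀ p q, (sign (σ * blockPerm p q) : ℤ) •
        blockProd (fun x y => μ x y) A B (fun i => v ((σ * blockPerm p q) i)) =
        (sign σ : ℤ) • blockProd (fun x y => μ x y) A B (fun i => v (σ i)) := fun p q => by
      simp only [Perm.mul_apply]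
      rw [blockProd_comp_blockPerm μ hA hB p q (fun i => v (σ i)), Perm.sign_mul, Units.val_mul,
        mul_smul, sign_smul_sign_smul]
    simp only [hblock, Finset.sum_const, Finset.card_univ, Fintype.card_perm, Fintype.card_fin,
      mul_smul]
  · simp

lemma wedge_nsmul_left (A : (Fin k → V) → E) (B : (Fin l → V) → F) (n : ℕ) :
    wedge (fun x y => μ x y) (n • A) B = n • wedge (fun x y => μ x y) A B := by
  ext v
  simp [wedge, Finset.smul_sum, smul_comm n]

lemma wedge_nsmul_right (A : (Fin k → V) → E) (B : (Fin l → V) → F) (n : ℕ) :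
    wedge (fun x y => μ x y) A (n • B) = n • wedge (fun x y => μ x y) A B := by
  ext v
  simp [wedge, Finset.smul_sum, smul_comm n]

lemma blockProd_antisymmetrize_left (A : (Fin k → V) → E) (B : (Fin l → V) → F) :
    blockProd (fun x y => μ x y) (antisymmetrize A) B =
      ∑ ρ : Perm (Fin k), (sign ρ : ℤ) •
        fun v => blockProd (fun x y => μ x y) A B (fun i => v (blockPerm ρ 1 i)) := by
  ext v
  simp [blockProd, antisymmetrize_apply, Finset.sum_apply]

lemma blockProd_antisymmetrize_right (A : (Fin k → V) → E) (B : (Fin l → V) → F) :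
    blockProd (fun x y => μ x y) A (antisymmetrize B) =
      ∑ ρ : Perm (Fin l), (sign ρ : ℤ) •
        fun v => blockProd (fun x y => μ x y) A B (fun i => v (blockPerm 1 ρ i)) := by
  ext v
  simp [blockProd, antisymmetrize_apply, Finset.sum_apply]

lemma antisymmetrize_blockProd_antisymmetrize_left (A : (Fin k → V) → E)
    (B : (Fin l → V) → F) :
    antisymmetrize (blockProd (fun x y => μ x y) (antisymmetrize A) B) =
      k ! • antisymmetrize (blockProd (fun x y => μ x y) A B) := by
  simp only [blockProd_antisymmetrize_left, map_sum, map_zsmul, antisymmetrize_comp_perm,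
    sign_blockPerm, Perm.sign_one, mul_one, sign_smul_sign_smul, Finset.sum_const,
    Finset.card_univ, Fintype.card_perm, Fintype.card_fin]

lemma antisymmetrize_blockProd_antisymmetrize_right (A : (Fin k → V) → E)
    (B : (Fin l → V) → F) :
    antisymmetrize (blockProd (fun x y => μ x y) A (antisymmetrize B)) =
      l ! • antisymmetrize (blockProd (fun x y => μ x y) A B) := by
  simp only [blockProd_antisymmetrize_right, map_sum, map_zsmul, antisymmetrize_comp_perm,
    sign_blockPerm, Perm.sign_one, one_mul, sign_smul_sign_smul, Finset.sum_const,
    Finset.card_univ, Fintype.card_perm, Fintype.card_fin]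

end BlockProd

section Triple

variable {R V E F G Y W : Type*} [CommSemiring R] [AddCommGroup E] [Module R E]
  [AddCommGroup F] [Module R F] [AddCommGroup G] [Module R G] [AddCommGroup Y] [Module R Y]
  [AddCommGroup W] [Module R W] [IsAddTorsionFree W] {k l m : ℕ}
  {A : (Fin k → V) → E} {B : (Fin l → V) → F} {C : (Fin m → V) → G}

theorem factorial_smul_wedge_wedge_left (μ : E →ₗ[R] Y →ₗ[R] W) (ν : F →ₗ[R] G →ₗ[R] Y)
    (hA : IsSkewSymmetric A) (hB : IsSkewSymmetric B) (hC : IsSkewSymmetric C) :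
    (k ! * l ! * m !) • wedge (fun x y => μ x y) A (wedge (fun x y => ν x y) B C) =
      antisymmetrize (blockProd (fun x y => μ x y) A (blockProd (fun x y => ν x y) B C)) := by
  apply nsmul_right_injective (Nat.factorial_ne_zero (l + m))
  dsimp only
  rw [← antisymmetrize_blockProd_antisymmetrize_right,
    ← factorial_mul_factorial_smul_wedge μ hA (isSkewSymmetric_antisymmetrize _),
    ← factorial_mul_factorial_smul_wedge ν hB hC, wedge_nsmul_right, smul_smul, smul_smul]
  ring_nf

theorem factorial_smul_wedge_wedge_right (μ : Y →ₗ[R] G →ₗ[R] W) (ν : E →ₗ[R] F →ₗ[R] Y)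
    (hA : IsSkewSymmetric A) (hB : IsSkewSymmetric B) (hC : IsSkewSymmetric C) :
    (k ! * l ! * m !) • wedge (fun x y => μ x y) (wedge (fun x y => ν x y) A B) C =
      antisymmetrize (blockProd (fun x y => μ x y) (blockProd (fun x y => ν x y) A B) C) := by
  apply nsmul_right_injective (Nat.factorial_ne_zero (k + l))
  dsimp only
  rw [← antisymmetrize_blockProd_antisymmetrize_left,
    ← factorial_mul_factorial_smul_wedge μ (isSkewSymmetric_antisymmetrize _) hC,
    ← factorial_mul_factorial_smul_wedge ν hA hB, wedge_nsmul_left, smul_smul, smul_smul]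
  ring_nf

end Triple

section Reindex

variable {V W : Type*} {m n : ℕ}

lemma reindex_smul {S : Type*} [SMul S W] (h : m = n) (c : S) (f : (Fin m → V) → W) :
    reindex h (c • f) = c • reindex h f :=
  rfl

lemma reindex_antisymmetrize [AddCommGroup W] (h : m = n) (f : (Fin m → V) → W) :
    reindex h (antisymmetrize f) = antisymmetrize (reindex h f) := by
  subst h
  rfl

variable {E F G Y : Type*} {k l : ℕ}

lemma reindex_blockProd_blockProd (μ : Y → G → W) (ν : E → F → Y) (A : (Fin k → V) → E)
    (B : (Fin l → V) → F) (C : (Fin m → V) → G) :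
    reindex (Nat.add_assoc k l m) (blockProd μ (blockProd ν A B) C) =
      blockProd (fun a bc => μ (ν a bc.1) bc.2) A (blockProd Prod.mk B C) := by
  ext v
  have hA (i : Fin k) : Fin.cast (Nat.add_assoc k l m) (Fin.castAdd m (Fin.castAdd l i)) =
      Fin.castAdd (l + m) i := Fin.ext rfl
  have hB (j : Fin l) : Fin.cast (Nat.add_assoc k l m) (Fin.castAdd m (Fin.natAdd k j)) =
      Fin.natAdd k (Fin.castAdd m j) := Fin.ext rfl
  have hC (j : Fin m) : Fin.cast (Nat.add_assoc k l m) (Fin.natAdd (k + l) j) =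
      Fin.natAdd k (Fin.natAdd l j) := Fin.ext (Nat.add_assoc k l j)
  simp only [reindex, blockProd, hA, hB, hC]

end Reindex

lemma coe_finRotate_pow (n b : ℕ) (x : Fin n) : ((finRotate n ^ b) x : ℕ) = (x + b) % n := by
  induction b with
  | zero => simp [Nat.mod_eq_of_lt x.2]
  | succ b ih =>
    rw [pow_succ', Perm.mul_apply, finRotate_apply, Fin.val_add, ih, Fin.val_one',
      Nat.add_mod_mod, Nat.mod_add_mod, add_assoc]

lemma sign_finRotate_pow (k l : ℕ) : sign (finRotate (k + l) ^ l) = (-1) ^ (k * l) := by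
  rcases l with _ | l
  · simp
  rw [map_pow, sign_finRotate, ← pow_mul, show (k + (l + 1) - 1) * (l + 1) =
    k * (l + 1) + l * (l + 1) by rw [show k + (l + 1) - 1 = k + l by omega]; ring]
  rw [pow_add, (Nat.even_mul_succ_self l).neg_one_pow, mul_one]

/-- On `Fin (k + l)`, `finRotate (k + l) ^ l` is `i ↦ i + l mod (k + l)`: it moves the first
block, of length `k`, behind the second one; the last `m` positions are fixed. -/
def swapBlocks (k l m : ℕ) : Perm (Fin (k + (l + m))) :=
  (finCongr (Nat.add_assoc k l m)).permCongr (blockPerm (finRotate (k + l) ^ l) 1)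

lemma sign_swapBlocks (k l m : ℕ) : sign (swapBlocks k l m) = (-1) ^ (k * l) := by
  rw [swapBlocks, sign_permCongr, sign_blockPerm, Perm.sign_one, mul_one, sign_finRotate_pow]

section SwapBlocks

variable {k l m : ℕ} (h : l + (k + m) = k + (l + m))

lemma swapBlocks_castAdd (i : Fin k) :
    swapBlocks k l m (Fin.castAdd (l + m) i) = Fin.cast h (Fin.natAdd l (Fin.castAdd m i)) := by
  have hi : (finCongr (Nat.add_assoc k l m)).symm (Fin.castAdd (l + m) i) =
    Fin.castAdd m (Fin.castAdd l i) := Fin.ext rfl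
  ext
  rw [swapBlocks, permCongr_apply, hi, blockPerm_castAdd]
  simp only [finCongr_apply, Fin.val_cast, Fin.val_castAdd, Fin.val_natAdd, coe_finRotate_pow]
  rw [Nat.mod_eq_of_lt (by omega), add_comm]

lemma swapBlocks_natAdd_castAdd (j : Fin l) :
    swapBlocks k l m (Fin.natAdd k (Fin.castAdd m j)) = Fin.cast h (Fin.castAdd (k + m) j) := by
  have hj : (finCongr (Nat.add_assoc k l m)).symm (Fin.natAdd k (Fin.castAdd m j)) =
    Fin.castAdd m (Fin.natAdd k j) := Fin.ext rfl
  ext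
  rw [swapBlocks, permCongr_apply, hj, blockPerm_castAdd]
  simp only [finCongr_apply, Fin.val_cast, Fin.val_castAdd, Fin.val_natAdd, coe_finRotate_pow]
  rw [add_right_comm, Nat.add_mod_left, Nat.mod_eq_of_lt (by omega)]

lemma swapBlocks_natAdd_natAdd (j : Fin m) :
    swapBlocks k l m (Fin.natAdd k (Fin.natAdd l j)) =
      Fin.cast h (Fin.natAdd l (Fin.natAdd k j)) := by
  have hj : (finCongr (Nat.add_assoc k l m)).symm (Fin.natAdd k (Fin.natAdd l j)) =
    Fin.natAdd (k + l) j := Fin.ext (Nat.add_assoc k l j).symm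
  ext
  rw [swapBlocks, permCongr_apply, hj, blockPerm_natAdd]
  simp only [finCongr_apply, Fin.val_cast, Fin.val_natAdd, Perm.one_apply]
  omega

lemma reindex_blockProd_blockProd_comm {V E F G Y W : Type*} (μ : F → Y → W) (ν : E → G → Y)
    (A : (Fin k → V) → E) (B : (Fin l → V) → F) (C : (Fin m → V) → G) :
    reindex h (blockProd μ B (blockProd ν A C)) = fun v =>
      blockProd (fun a bc => μ bc.1 (ν a bc.2)) A (blockProd Prod.mk B C)
        (fun i => v (swapBlocks k l m i)) := by
  ext v
  simp only [reindex, blockProd, swapBlocks_castAdd h, swapBlocks_natAdd_castAdd h,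
    swapBlocks_natAdd_natAdd h]

end SwapBlocks

/-- For bilinear actions `▷` of `g` on `h` and on `l`, and a `g`-equivariant bilinear map
`{,} : h × h → l`,
`A ∧^▷ (B₁ ∧^{{,}} B₂) = (A ∧^▷ B₁) ∧^{{,}} B₂ + (-1)^(k t₁) B₁ ∧^{{,}} (A ∧^▷ B₂)`. -/
theorem act_wedge_peiffer_leibniz {g h l V : Type*} [AddCommGroup g] [Module ℝ g]
    [AddCommGroup h] [Module ℝ h] [AddCommGroup l] [Module ℝ l]
    [AddCommGroup V] [Module ℝ V]
    (actH : g →ₗ[ℝ] h →ₗ[ℝ] h) (actL : g →ₗ[ℝ] l →ₗ[ℝ] l)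
    (P : h →ₗ[ℝ] h →ₗ[ℝ] l)
    (P_equiv : ∀ (X : g) (Y₁ Y₂ : h),
      actL X (P Y₁ Y₂) = P (actH X Y₁) Y₂ + P Y₁ (actH X Y₂))
    {k t₁ t₂ : ℕ} (A : AlternatingMap ℝ V g (Fin k))
    (B₁ : AlternatingMap ℝ V h (Fin t₁)) (B₂ : AlternatingMap ℝ V h (Fin t₂)) :
    wedge (fun X Z => actL X Z) ⇑A (wedge (fun Y Y' => P Y Y') ⇑B₁ ⇑B₂) =
      reindex (Nat.add_assoc k t₁ t₂)
        (wedge (fun Y Y' => P Y Y') (wedge (fun X Y => actH X Y) ⇑A ⇑B₁) ⇑B₂)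
      + ((-1 : ℝ) ^ (k * t₁)) •
        reindex (by omega : t₁ + (k + t₂) = k + (t₁ + t₂))
          (wedge (fun Y Y' => P Y Y') ⇑B₁ (wedge (fun X Y => actH X Y) ⇑A ⇑B₂)) := by
  have : IsAddTorsionFree l := .of_isTorsionFree ℝ l
  have hA := A.isSkewSymmetric
  have hB₁ := B₁.isSkewSymmetric
  have hB₂ := B₂.isSkewSymmetric
  have hsplit : blockProd (fun X Z => actL X Z) ⇑A (blockProd (fun Y Y' => P Y Y') ⇑B₁ ⇑B₂) =
      blockProd (fun X Y => P (actH X Y.1) Y.2) ⇑A (blockProd Prod.mk ⇑B₁ ⇑B₂) +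
        blockProd (fun X Y => P Y.1 (actH X Y.2)) ⇑A (blockProd Prod.mk ⇑B₁ ⇑B₂) := by
    ext v
    exact P_equiv _ _ _
  have hfirst : (k ! * t₁ ! * t₂ !) • reindex (Nat.add_assoc k t₁ t₂)
      (wedge (fun Y Y' => P Y Y') (wedge (fun X Y => actH X Y) ⇑A ⇑B₁) ⇑B₂) =
      antisymmetrize
        (blockProd (fun X Y => P (actH X Y.1) Y.2) ⇑A (blockProd Prod.mk ⇑B₁ ⇑B₂)) := by
    rw [← reindex_smul, factorial_smul_wedge_wedge_right P actH hA hB₁ hB₂,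
      reindex_antisymmetrize, reindex_blockProd_blockProd]
  have hsecond : (k ! * t₁ ! * t₂ !) • ((-1 : ℝ) ^ (k * t₁)) •
      reindex (by omega : t₁ + (k + t₂) = k + (t₁ + t₂))
        (wedge (fun Y Y' => P Y Y') ⇑B₁ (wedge (fun X Y => actH X Y) ⇑A ⇑B₂)) =
      antisymmetrize
        (blockProd (fun X Y => P Y.1 (actH X Y.2)) ⇑A (blockProd Prod.mk ⇑B₁ ⇑B₂)) := by
    rw [smul_comm, ← reindex_smul, show k ! * t₁ ! * t₂ ! = t₁ ! * k ! * (t₂ !) by ring,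
      factorial_smul_wedge_wedge_left P actH hB₁ hA hB₂, reindex_antisymmetrize,
      reindex_blockProd_blockProd_comm, antisymmetrize_comp_perm, sign_swapBlocks]
    rw [← Int.cast_smul_eq_zsmul ℝ, smul_smul]
    simp [← mul_pow]
  apply nsmul_right_injective (by positivity : k ! * t₁ ! * t₂ ! ≠ 0)
  dsimp only
  rw [smul_add, hfirst, hsecond, factorial_smul_wedge_wedge_left actL P hA hB₁ hB₂, hsplit,
    map_add]
end

section
/- Let g and h be real vector spaces, ▷ : g × h → h a bilinear action, and ⟨,⟩_h a symmetric bilinear form on h satisfying ⟨Y, X ▷ Y'⟩_h = − ⟨X ▷ Y, Y'⟩_h for all X ∈ g and Y, Y' ∈ h. Then for a real vector space V and alternating multilinear maps A : V^k → g, B₁ : V^{t₁} → h, B₂ : V^{t₂} → h, one has ⟨B₁, A ∧^▷ B₂⟩ = (−1)^{t₂(k+t₁) + k t₁ + 1} ⟨B₂, A ∧^▷ B₁⟩ = (−1)^{k t₁ + 1} ⟨A ∧^▷ B₁, B₂⟩ as alternating (k+t₁+t₂)-linear maps V^{k+t₁+t₂} → ℝ. -/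
/-! The `μ`-wedge is associative, `A ∧ (B ∧ C) = (A ∧ B) ∧ C` whenever
`μ₁ x (μ₂ y z) = ν₁ (ν₂ x y) z`: both sides are the signed sum over permutations increasing on
each of the three blocks of indices, because every permutation factors uniquely as one that is
increasing on the inner block times a permutation of that block. It is graded commutative,
`A ∧ B = (-1)^(kl) B ∧ A`, the block swap being the rotation `finRotate (k + l) ^ k`.
Since `⟨Y, X ▷ Y'⟩ = ⟨-(X ▷ Y), Y'⟩`, associativity followed by commutativity of the inner wedge
gives the second identity; commutativity of the outer wedge and symmetry of `⟨,⟩` turn it into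
the first. -/

open Equiv Equiv.Perm Fin

theorem StrictMono.strictMono_comp_iff {α β γ : Type*} [Preorder α] [LinearOrder β]
    [Preorder γ] {g : β → γ} (hg : StrictMono g) {f : α → β} :
    StrictMono (g ∘ f) ↔ StrictMono f :=
  ⟨fun h _ _ hab => hg.lt_iff_lt.mp (h hab), hg.comp⟩

section SignedSum

variable {ι κ V G : Type*} [Fintype ι] [DecidableEq ι] [AddCommGroup G]

def signedSum (P : Perm ι → Prop) [DecidablePred P] (Φ : (ι → V) → G) (v : ι → V) : G :=
  ∑ ρ : Perm ι, if P ρ then (sign ρ : ℤ) • Φ (v ∘ ρ) else 0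

theorem signedSum_congr {P Q : Perm ι → Prop} [DecidablePred P] [DecidablePred Q]
    (h : ∀ ρ, P ρ ↔ Q ρ) (Φ : (ι → V) → G) : signedSum P Φ = signedSum Q Φ :=
  funext fun _ => Finset.sum_congr rfl fun ρ _ => if_congr (h ρ) rfl rfl

theorem signedSum_comp_equiv [Fintype κ] [DecidableEq κ] (φ : κ ≃ ι) (π : Perm ι)
    {P' : Perm κ → Prop} {P : Perm ι → Prop} [DecidablePred P'] [DecidablePred P]
    {Φ' : (κ → V) → G} {Φ : (ι → V) → G}
    (hP : ∀ ρ, P' ρ ↔ P (φ.permCongr ρ * π⁻¹)) (hΦ : ∀ w, Φ' (w ∘ π ∘ φ) = Φ w) (v : ι → V) :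
    signedSum P' Φ' (v ∘ φ) = (sign π : ℤ) • signedSum P Φ v := by
  rw [signedSum, signedSum, Finset.smul_sum]
  refine Fintype.sum_equiv (φ.permCongr.trans (Equiv.mulRight π⁻¹)) _ _ fun ρ => ?_
  simp only [Equiv.trans_apply, Equiv.coe_mulRight, ← hP ρ]
  split_ifs
  · have hv : (v ∘ φ) ∘ ρ = (v ∘ ⇑(φ.permCongr ρ * π⁻¹)) ∘ π ∘ φ := by
      ext x; simp [Equiv.permCongr_apply]
    rw [hv, hΦ, smul_smul, Perm.sign_mul, sign_permCongr, Perm.sign_inv, Units.val_mul,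
      mul_comm (sign ρ : ℤ), ← mul_assoc, ← Units.val_mul, Int.units_mul_self, Units.val_one,
      one_mul]
  · rw [smul_zero]

end SignedSum

section TripleShuffle

variable {ι κ : Type*} [LinearOrder ι] [LinearOrder κ] {a b c : ℕ}

def IsTripleShuffle (e₁ : Fin a → ι) (e₂ : Fin b → ι) (e₃ : Fin c → ι) (ρ : Perm ι) : Prop :=
  StrictMono (ρ ∘ e₁) ∧ StrictMono (ρ ∘ e₂) ∧ StrictMono (ρ ∘ e₃)

instance (e₁ : Fin a → ι) (e₂ : Fin b → ι) (e₃ : Fin c → ι) :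
    DecidablePred (IsTripleShuffle e₁ e₂ e₃) :=
  fun _ => instDecidableAnd

theorem strictMono_permCongr_mul_inv_comp_iff {α : Type*} [Preorder α] {φ : κ ≃ ι}
    (hφ : StrictMono φ) (π : Perm ι) (ρ : Perm κ) {e : α → ι} {f : α → κ}
    (hfe : ⇑π ∘ φ ∘ f = e) :
    StrictMono (⇑(φ.permCongr ρ * π⁻¹) ∘ e) ↔ StrictMono (ρ ∘ f) := by
  have : ⇑(φ.permCongr ρ * π⁻¹) ∘ e = φ ∘ ρ ∘ f := by
    ext x; simp [Equiv.permCongr_apply, ← hfe]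
  rw [this, hφ.strictMono_comp_iff]

theorem isTripleShuffle_permCongr_mul_inv_iff {φ : κ ≃ ι} (hφ : StrictMono φ) (π : Perm ι)
    (ρ : Perm κ) {e₁ : Fin a → ι} {e₂ : Fin b → ι} {e₃ : Fin c → ι} {f₁ : Fin a → κ}
    {f₂ : Fin b → κ} {f₃ : Fin c → κ} (h₁ : ⇑π ∘ φ ∘ f₁ = e₁) (h₂ : ⇑π ∘ φ ∘ f₂ = e₂)
    (h₃ : ⇑π ∘ φ ∘ f₃ = e₃) :
    IsTripleShuffle e₁ e₂ e₃ (φ.permCongr ρ * π⁻¹) ↔ IsTripleShuffle f₁ f₂ f₃ ρ := by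
  rw [IsTripleShuffle, IsTripleShuffle, strictMono_permCongr_mul_inv_comp_iff hφ π ρ h₁,
    strictMono_permCongr_mul_inv_comp_iff hφ π ρ h₂,
    strictMono_permCongr_mul_inv_comp_iff hφ π ρ h₃]

end TripleShuffle

theorem val_finRotate_pow (n j : ℕ) (x : Fin n) : ((finRotate n ^ j) x : ℕ) = (x + j) % n := by
  obtain ⟨n, rfl⟩ := Nat.exists_eq_add_one.mpr x.pos
  induction j with
  | zero => simp [Nat.mod_eq_of_lt x.isLt]
  | succ j ih =>
    rw [pow_succ', Perm.mul_apply, finRotate_apply, Fin.val_add, ih, Fin.val_one',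
      Nat.mod_add_mod, Nat.add_mod_mod, add_assoc]

theorem sign_finRotate_add_pow (k l : ℕ) : sign (finRotate (k + l) ^ k) = (-1) ^ (k * l) := by
  rcases k with _ | m
  · simp
  rw [map_pow, sign_finRotate, ← pow_mul, show m + 1 + l - 1 = m + l by omega, add_mul, pow_add,
    (Nat.even_mul_succ_self m).neg_one_pow, one_mul, mul_comm]

section Wedge

variable {V E F W : Type*} [AddCommGroup W]

theorem isShuffle_iff {k l : ℕ} {σ : Perm (Fin (k + l))} :
    IsShuffle k l σ ↔ StrictMono (σ ∘ castAdd l) ∧ StrictMono (σ ∘ natAdd k) :=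
  Iff.rfl

theorem wedge_eq_signedSum (μ : E → F → W) {k l : ℕ} (A : (Fin k → V) → E)
    (B : (Fin l → V) → F) :
    wedge μ A B = signedSum (IsShuffle k l) fun w => μ (A (w ∘ castAdd l)) (B (w ∘ natAdd k)) :=
  rfl

theorem wedge_comm (μ : E → F → W) {k l : ℕ} (A : (Fin k → V) → E) (B : (Fin l → V) → F) :
    wedge μ A B = ((-1 : ℤ) ^ (k * l)) • reindex (add_comm l k) (wedge (fun y x => μ x y) B A) := by
  have hA : ⇑(finRotate (k + l) ^ k) ∘ finCongr (add_comm l k) ∘ natAdd l = castAdd l := by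
    ext x
    simp only [Function.comp_apply, val_finRotate_pow, finCongr_apply, val_cast, val_natAdd,
      val_castAdd]
    rw [show l + x + k = x + (k + l) by omega, Nat.add_mod_right, Nat.mod_eq_of_lt (by omega)]
  have hB : ⇑(finRotate (k + l) ^ k) ∘ finCongr (add_comm l k) ∘ castAdd k = natAdd k := by
    ext y
    simp only [Function.comp_apply, val_finRotate_pow, finCongr_apply, val_cast, val_natAdd,
      val_castAdd]
    rw [Nat.mod_eq_of_lt (by omega), add_comm]
  have hφ : StrictMono (finCongr (add_comm l k)) := Fin.cast_strictMono (add_comm l k)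
  funext v
  have key := signedSum_comp_equiv (finCongr (add_comm l k)) (finRotate (k + l) ^ k)
    (P' := IsShuffle l k) (P := IsShuffle k l)
    (Φ' := fun w => μ (A (w ∘ natAdd l)) (B (w ∘ castAdd k)))
    (Φ := fun w => μ (A (w ∘ castAdd l)) (B (w ∘ natAdd k)))
    (fun ρ => by
      rw [isShuffle_iff, isShuffle_iff, and_comm, strictMono_permCongr_mul_inv_comp_iff hφ _ _ hA,
        strictMono_permCongr_mul_inv_comp_iff hφ _ _ hB])
    (fun w => by simp only [Function.comp_assoc, hA, hB]) v
  rw [sign_finRotate_add_pow] at key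
  rw [Pi.smul_apply, reindex, wedge_eq_signedSum, wedge_eq_signedSum]
  change _ = _ • signedSum _ _ (v ∘ finCongr (add_comm l k))
  rw [key, smul_smul, Units.val_pow_eq_pow_val, Units.val_neg, Units.val_one, ← mul_pow,
    neg_one_mul, neg_neg, one_pow, one_smul]

end Wedge

section Factorization

variable {ι : Type*} [DecidableEq ι] {m : ℕ}

theorem Equiv.Perm.viaFintypeEmbedding_mul (e : Fin m ↪ ι) (σ σ' : Perm (Fin m)) :
    (σ * σ').viaFintypeEmbedding e = σ.viaFintypeEmbedding e * σ'.viaFintypeEmbedding e :=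
  (extendDomain_mul _ _ _).symm

theorem Equiv.Perm.mul_viaFintypeEmbedding_mul_inv (e : Fin m ↪ ι) (τ : Perm ι) (σ : Perm (Fin m)) :
    τ * σ.viaFintypeEmbedding e * σ⁻¹.viaFintypeEmbedding e = τ := by
  rw [mul_assoc, ← viaFintypeEmbedding_mul, mul_inv_cancel, viaFintypeEmbedding,
    extendDomain_one, mul_one]

variable [LinearOrder ι]

theorem strictMono_mul_viaFintypeEmbedding_sort (e : Fin m ↪ ι) (ρ : Perm ι) :
    StrictMono (⇑(ρ * (Tuple.sort (ρ ∘ e)).viaFintypeEmbedding e) ∘ e) := by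
  have h : ⇑(ρ * (Tuple.sort (ρ ∘ e)).viaFintypeEmbedding e) ∘ e = ρ ∘ e ∘ Tuple.sort (ρ ∘ e) := by
    ext x; simp
  rw [h]
  exact (Tuple.monotone_sort (ρ ∘ e)).strictMono_of_injective
    ((ρ.injective.comp e.injective).comp (Tuple.sort _).injective)

omit [DecidableEq ι] in
theorem Tuple.sort_comp_perm_eq_inv {f : Fin m → ι} (hf : StrictMono f) (σ : Perm (Fin m)) :
    Tuple.sort (f ∘ σ) = σ⁻¹ := by
  symm
  rw [Tuple.eq_sort_iff]
  refine ⟨by simpa [Function.comp_def] using hf.monotone, fun i j hij h => ?_⟩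
  exact absurd (hf.injective (by simpa using h)) hij.ne

def strictMonoMulEquiv [Fintype ι] (e : Fin m ↪ ι) :
    {τ : Perm ι // StrictMono (τ ∘ e)} × Perm (Fin m) ≃ Perm ι where
  toFun p := p.1.1 * p.2.viaFintypeEmbedding e
  invFun ρ := (⟨_, strictMono_mul_viaFintypeEmbedding_sort e ρ⟩, (Tuple.sort (ρ ∘ e))⁻¹)
  left_inv := by
    rintro ⟨⟨τ, hτ⟩, σ⟩
    have hs : Tuple.sort (⇑(τ * σ.viaFintypeEmbedding e) ∘ e) = σ⁻¹ := by
      rw [← Tuple.sort_comp_perm_eq_inv hτ σ]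
      congr 1; ext x; simp
    refine Prod.ext (Subtype.ext ?_) ?_
    · change τ * σ.viaFintypeEmbedding e *
        (Tuple.sort (⇑(τ * σ.viaFintypeEmbedding e) ∘ e)).viaFintypeEmbedding e = τ
      rw [hs, mul_viaFintypeEmbedding_mul_inv]
    · change (Tuple.sort (⇑(τ * σ.viaFintypeEmbedding e) ∘ e))⁻¹ = σ
      rw [hs, inv_inv]
  right_inv ρ := mul_viaFintypeEmbedding_mul_inv e ρ _

theorem sum_perm_eq_sum_strictMono_mul [Fintype ι] {G : Type*} [AddCommMonoid G] (e : Fin m ↪ ι)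
    (g : Perm ι → G) :
    ∑ ρ, g ρ = ∑ τ : Perm ι, if StrictMono (τ ∘ e) then
      ∑ σ : Perm (Fin m), g (τ * σ.viaFintypeEmbedding e) else 0 := by
  rw [← (strictMonoMulEquiv e).sum_comp, Fintype.sum_prod_type, ← Finset.sum_filter,
    Finset.sum_subtype (p := fun τ : Perm ι => StrictMono (τ ∘ e)) _ (by simp)]
  rfl

theorem signedSum_eq_sum_isShuffle_viaFintypeEmbedding [Fintype ι] {V G : Type*}
    [AddCommGroup G] {b c : ℕ} (e : Fin (b + c) ↪ ι) {P : Perm ι → Prop} [DecidablePred P]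
    (hP : ∀ τ (σ : Perm (Fin (b + c))), P (τ * σ.viaFintypeEmbedding e) ↔ P τ)
    (Φ : (ι → V) → G) (v : ι → V) :
    signedSum (fun ρ => P ρ ∧ StrictMono (ρ ∘ e ∘ castAdd c) ∧ StrictMono (ρ ∘ e ∘ natAdd b)) Φ v =
      ∑ τ : Perm ι, if P τ ∧ StrictMono (τ ∘ e) then (sign τ : ℤ) •
        ∑ σ : Perm (Fin (b + c)), if IsShuffle b c σ then
          (sign σ : ℤ) • Φ (v ∘ τ ∘ σ.viaFintypeEmbedding e) else 0
      else 0 := by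
  rw [signedSum, sum_perm_eq_sum_strictMono_mul e]
  refine Finset.sum_congr rfl fun τ _ => ?_
  by_cases hτ : StrictMono (τ ∘ e)
  · have hblocks : ∀ σ : Perm (Fin (b + c)),
        (P (τ * σ.viaFintypeEmbedding e) ∧
          StrictMono (⇑(τ * σ.viaFintypeEmbedding e) ∘ e ∘ castAdd c) ∧
          StrictMono (⇑(τ * σ.viaFintypeEmbedding e) ∘ e ∘ natAdd b)) ↔
        P τ ∧ IsShuffle b c σ := fun σ => by
      have hcomp : ∀ {α : Type} (f : α → Fin (b + c)),
          ⇑(τ * σ.viaFintypeEmbedding e) ∘ e ∘ f = (τ ∘ e) ∘ σ ∘ f := fun f => by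
        ext; simp
      rw [hP, isShuffle_iff, hcomp, hcomp, hτ.strictMono_comp_iff, hτ.strictMono_comp_iff]
    simp only [hblocks, hτ, and_true, if_true]
    by_cases hPτ : P τ
    · simp only [hPτ, true_and, if_true, Finset.smul_sum]
      refine Finset.sum_congr rfl fun σ _ => ?_
      split_ifs
      · rw [smul_smul, Perm.sign_mul, viaFintypeEmbedding_sign, Units.val_mul]
        rfl
      · rw [smul_zero]
    · simp [hPτ]
  · simp [hτ]

end Factorization

section Blocks

variable {m n : ℕ} (σ : Perm (Fin n))

theorem Equiv.Perm.viaFintypeEmbedding_natAddEmb_castAdd (x : Fin m) :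
    σ.viaFintypeEmbedding (natAddEmb m) (castAdd n x) = castAdd n x :=
  viaFintypeEmbedding_apply_notMem_range _ _ fun ⟨y, hy⟩ => by
    have := congrArg Fin.val hy
    simp only [natAddEmb_apply, val_natAdd, val_castAdd] at this
    omega

theorem Equiv.Perm.viaFintypeEmbedding_natAddEmb_natAdd (y : Fin n) :
    σ.viaFintypeEmbedding (natAddEmb m) (natAdd m y) = natAdd m (σ y) :=
  viaFintypeEmbedding_apply_image _ (natAddEmb m) y

theorem Equiv.Perm.viaFintypeEmbedding_castAddEmb_castAdd (x : Fin n) :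
    σ.viaFintypeEmbedding (castAddEmb m) (castAdd m x) = castAdd m (σ x) :=
  viaFintypeEmbedding_apply_image _ (castAddEmb m) x

theorem Equiv.Perm.viaFintypeEmbedding_castAddEmb_natAdd (y : Fin m) :
    σ.viaFintypeEmbedding (castAddEmb m) (natAdd n y) = natAdd n y :=
  viaFintypeEmbedding_apply_notMem_range _ _ fun ⟨x, hx⟩ => by
    have := congrArg Fin.val hx
    simp only [coe_castAddEmb, val_castAdd, val_natAdd] at this
    omega

end Blocks

section Associativity

variable {V E₁ E₂ E₃ W W' G : Type*} [AddCommGroup W] [AddCommGroup W'] [AddCommGroup G]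
  {a b c : ℕ}

theorem wedge_wedge_right_eq_signedSum (μ₁ : E₁ → W → G) (μ₂ : E₂ → E₃ → W)
    (hμ₁ : ∀ x y y', μ₁ x (y + y') = μ₁ x y + μ₁ x y') (A : (Fin a → V) → E₁)
    (B : (Fin b → V) → E₂) (C : (Fin c → V) → E₃) :
    wedge μ₁ A (wedge μ₂ B C) =
      signedSum (IsTripleShuffle (castAdd (b + c)) (natAdd a ∘ castAdd c) (natAdd a ∘ natAdd b))
        fun w => μ₁ (A (w ∘ castAdd (b + c)))
          (μ₂ (B (w ∘ natAdd a ∘ castAdd c)) (C (w ∘ natAdd a ∘ natAdd b))) := by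
  funext v
  have hP : ∀ τ (σ : Perm (Fin (b + c))),
      StrictMono (⇑(τ * σ.viaFintypeEmbedding (natAddEmb a)) ∘ castAdd (b + c)) ↔
        StrictMono (τ ∘ castAdd (b + c)) := fun τ σ => by
    have : ⇑(τ * σ.viaFintypeEmbedding (natAddEmb a)) ∘ castAdd (b + c) = τ ∘ castAdd (b + c) := by
      ext x; simp [viaFintypeEmbedding_natAddEmb_castAdd]
    rw [this]
  refine Eq.symm ((signedSum_eq_sum_isShuffle_viaFintypeEmbedding (natAddEmb a) hP _ v).trans ?_)
  refine Finset.sum_congr rfl fun τ _ => ?_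
  dsimp only [wedge]
  split_ifs with h₁ h₂ h₂
  · let f : W →+ G := AddMonoidHom.mk' (μ₁ (A fun i => v (τ (castAdd (b + c) i)))) (hμ₁ _)
    change _ = _ • f _
    rw [map_sum]
    congr 1
    refine Finset.sum_congr rfl fun σ _ => ?_
    rw [apply_ite f, map_zsmul, map_zero]
    simp only [f, AddMonoidHom.mk'_apply, Function.comp_def,
      viaFintypeEmbedding_natAddEmb_castAdd, viaFintypeEmbedding_natAddEmb_natAdd]
  · exact absurd h₁ h₂
  · exact absurd h₂ h₁
  · rfl

theorem wedge_wedge_left_eq_signedSum (ν₁ : W' → E₃ → G) (ν₂ : E₁ → E₂ → W')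
    (hν₁ : ∀ z y y', ν₁ (y + y') z = ν₁ y z + ν₁ y' z) (A : (Fin a → V) → E₁)
    (B : (Fin b → V) → E₂) (C : (Fin c → V) → E₃) :
    wedge ν₁ (wedge ν₂ A B) C =
      signedSum (IsTripleShuffle (castAdd c ∘ castAdd b) (castAdd c ∘ natAdd a) (natAdd (a + b)))
        fun w => ν₁ (ν₂ (A (w ∘ castAdd c ∘ castAdd b)) (B (w ∘ castAdd c ∘ natAdd a)))
          (C (w ∘ natAdd (a + b))) := by
  funext v
  have hP : ∀ τ (σ : Perm (Fin (a + b))),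
      StrictMono (⇑(τ * σ.viaFintypeEmbedding (castAddEmb c)) ∘ natAdd (a + b)) ↔
        StrictMono (τ ∘ natAdd (a + b)) := fun τ σ => by
    have : ⇑(τ * σ.viaFintypeEmbedding (castAddEmb c)) ∘ natAdd (a + b) = τ ∘ natAdd (a + b) := by
      ext x; simp [viaFintypeEmbedding_castAddEmb_natAdd]
    rw [this]
  rw [signedSum_congr (P := IsTripleShuffle _ _ _) (fun ρ => and_rotate.symm)]
  refine Eq.symm ((signedSum_eq_sum_isShuffle_viaFintypeEmbedding (castAddEmb c) hP _ v).trans ?_)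
  refine Finset.sum_congr rfl fun τ _ => ?_
  dsimp only [wedge]
  split_ifs with h₁ h₂ h₂
  · let f : W' →+ G := AddMonoidHom.mk' (ν₁ · (C fun i => v (τ (natAdd (a + b) i)))) (hν₁ _)
    change _ = _ • f _
    rw [map_sum]
    congr 1
    refine Finset.sum_congr rfl fun σ _ => ?_
    rw [apply_ite f, map_zsmul, map_zero]
    simp only [f, AddMonoidHom.mk'_apply, Function.comp_def,
      viaFintypeEmbedding_castAddEmb_castAdd, viaFintypeEmbedding_castAddEmb_natAdd]
  · exact absurd (and_comm.mp h₁) h₂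
  · exact absurd (and_comm.mp h₂) h₁
  · rfl

theorem wedge_assoc (μ₁ : E₁ → W → G) (μ₂ : E₂ → E₃ → W) (ν₁ : W' → E₃ → G)
    (ν₂ : E₁ → E₂ → W') (hμ₁ : ∀ x y y', μ₁ x (y + y') = μ₁ x y + μ₁ x y')
    (hν₁ : ∀ z y y', ν₁ (y + y') z = ν₁ y z + ν₁ y' z)
    (h : ∀ x y z, μ₁ x (μ₂ y z) = ν₁ (ν₂ x y) z) (A : (Fin a → V) → E₁)
    (B : (Fin b → V) → E₂) (C : (Fin c → V) → E₃) :
    wedge μ₁ A (wedge μ₂ B C) = reindex (add_assoc a b c) (wedge ν₁ (wedge ν₂ A B) C) := by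
  set φ := finCongr (add_assoc a b c)
  have hφ : StrictMono φ := Fin.cast_strictMono (add_assoc a b c)
  have hA : ⇑(1 : Perm (Fin (a + (b + c)))) ∘ φ ∘ (castAdd c ∘ castAdd b) = castAdd (b + c) := by
    ext x; simp [φ]
  have hB : ⇑(1 : Perm (Fin (a + (b + c)))) ∘ φ ∘ (castAdd c ∘ natAdd a) =
      natAdd a ∘ castAdd c := by
    ext x; simp [φ]
  have hC : ⇑(1 : Perm (Fin (a + (b + c)))) ∘ φ ∘ natAdd (a + b) = natAdd a ∘ natAdd b := by
    ext x; simp [φ, add_assoc]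
  funext v
  rw [wedge_wedge_right_eq_signedSum μ₁ μ₂ hμ₁, reindex, wedge_wedge_left_eq_signedSum ν₁ ν₂ hν₁]
  change _ = signedSum _ _ (v ∘ φ)
  rw [signedSum_comp_equiv φ 1
    (fun ρ => (isTripleShuffle_permCongr_mul_inv_iff hφ 1 ρ hA hB hC).symm)
    ?_, Perm.sign_one, Units.val_one, one_smul]
  intro w
  simp only [Function.comp_assoc, hA, hB, hC, h]

end Associativity

section WedgeAlgebra

variable {V E F W : Type*}

theorem reindex_reindex {l m n : ℕ} (h₁ : l = m) (h₂ : m = n) (f : (Fin l → V) → W) :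
    reindex h₂ (reindex h₁ f) = reindex (h₁.trans h₂) f := by
  subst h₁ h₂; rfl

theorem reindex_zsmul [AddCommGroup W] {m n : ℕ} (h : m = n) (z : ℤ) (f : (Fin m → V) → W) :
    reindex h (z • f) = z • reindex h f :=
  rfl

theorem reindex_neg [Neg W] {m n : ℕ} (h : m = n) (f : (Fin m → V) → W) :
    reindex h (-f) = -reindex h f :=
  rfl

theorem wedge_reindex_left [AddCommGroup W] (μ : E → F → W) {m m' l : ℕ} (h : m = m')
    (A : (Fin m → V) → E) (B : (Fin l → V) → F) :
    wedge μ (reindex h A) B = reindex (congrArg (· + l) h) (wedge μ A B) := by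
  subst h; rfl

theorem wedge_zsmul_left [AddCommGroup E] [AddCommGroup W] (μ : E → F → W)
    (hμ : ∀ y x x', μ (x + x') y = μ x y + μ x' y) {k l : ℕ} (z : ℤ) (A : (Fin k → V) → E)
    (B : (Fin l → V) → F) :
    wedge μ (z • A) B = z • wedge μ A B := by
  funext v
  simp only [wedge, Pi.smul_apply, Finset.smul_sum, smul_ite, smul_zero]
  refine Finset.sum_congr rfl fun σ _ => if_congr Iff.rfl ?_ rfl
  rw [smul_comm]
  exact congrArg _ (map_zsmul (AddMonoidHom.mk' (μ · _) (hμ _)) z _)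

theorem wedge_neg [AddCommGroup W] (μ : E → F → W) {k l : ℕ} (A : (Fin k → V) → E)
    (B : (Fin l → V) → F) :
    wedge (fun x y => -μ x y) A B = -wedge μ A B := by
  funext v
  simp only [wedge, Pi.neg_apply, ← Finset.sum_neg_distrib, neg_ite, neg_zero, smul_neg]

end WedgeAlgebra

/-- For a symmetric bilinear form `⟨,⟩_h` on `h` satisfying
`⟨Y, X ▷ Y'⟩ = - ⟨X ▷ Y, Y'⟩`, one has
`⟨B₁, A ∧^▷ B₂⟩ = (-1)^(t₂(k+t₁)+k t₁+1) ⟨B₂, A ∧^▷ B₁⟩ = (-1)^(k t₁+1) ⟨A ∧^▷ B₁, B₂⟩`. -/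
theorem inner_wedge_act_signs {g h V : Type*} [AddCommGroup g] [Module ℝ g]
    [AddCommGroup h] [Module ℝ h] [AddCommGroup V] [Module ℝ V]
    (act : g →ₗ[ℝ] h →ₗ[ℝ] h)
    (innh : h →ₗ[ℝ] h →ₗ[ℝ] ℝ)
    (innh_symm : ∀ Y Y' : h, innh Y Y' = innh Y' Y)
    (innh_act : ∀ (X : g) (Y Y' : h), innh Y (act X Y') = - innh (act X Y) Y')
    {k t₁ t₂ : ℕ} (A : AlternatingMap ℝ V g (Fin k))
    (B₁ : AlternatingMap ℝ V h (Fin t₁)) (B₂ : AlternatingMap ℝ V h (Fin t₂)) :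
    wedge (fun Y Y' => innh Y Y') ⇑B₁ (wedge (fun X Y => act X Y) ⇑A ⇑B₂) =
      ((-1 : ℝ) ^ (t₂ * (k + t₁) + k * t₁ + 1)) •
        reindex (by omega : t₂ + (k + t₁) = t₁ + (k + t₂))
          (wedge (fun Y Y' => innh Y Y') ⇑B₂ (wedge (fun X Y => act X Y) ⇑A ⇑B₁)) ∧
    wedge (fun Y Y' => innh Y Y') ⇑B₁ (wedge (fun X Y => act X Y) ⇑A ⇑B₂) =
      ((-1 : ℝ) ^ (k * t₁ + 1)) •
        reindex (by omega : (k + t₁) + t₂ = t₁ + (k + t₂))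
          (wedge (fun Y Y' => innh Y Y') (wedge (fun X Y => act X Y) ⇑A ⇑B₁) ⇑B₂) := by
  have real_smul : ∀ {N : ℕ} (n : ℕ) (f : (Fin N → V) → ℝ),
      ((-1 : ℝ) ^ n) • f = ((-1 : ℤ) ^ n) • f := fun n f => by
    rw [← Int.cast_smul_eq_zsmul ℝ]; push_cast; rfl
  have neg_innh_add : ∀ Y' Y₁ Y₂ : h, -innh (Y₁ + Y₂) Y' = -innh Y₁ Y' + -innh Y₂ Y' :=
    fun _ _ _ => by rw [map_add, LinearMap.add_apply, neg_add]
  set AB₁ := wedge (fun X Y => act X Y) ⇑A ⇑B₁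
  have swap_inner := wedge_comm (fun Y X => act X Y) ⇑B₁ ⇑A
  have swap_outer : wedge (fun Y Y' => innh Y Y') ⇑B₂ AB₁ =
      ((-1 : ℤ) ^ (t₂ * (k + t₁))) • reindex (add_comm (k + t₁) t₂)
        (wedge (fun Y Y' => innh Y Y') AB₁ ⇑B₂) := by
    simpa only [innh_symm] using wedge_comm (fun Y Y' => innh Y Y') ⇑B₂ AB₁
  have second_identity :
      wedge (fun Y Y' => innh Y Y') ⇑B₁ (wedge (fun X Y => act X Y) ⇑A ⇑B₂) =
        ((-1 : ℤ) ^ (k * t₁ + 1)) • reindex (by omega : (k + t₁) + t₂ = t₁ + (k + t₂))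
          (wedge (fun Y Y' => innh Y Y') AB₁ ⇑B₂) := by
    rw [wedge_assoc (fun Y Y' => innh Y Y') (fun X Y => act X Y) (fun Y Y' => -innh Y Y')
        (fun Y X => act X Y) (fun _ => map_add _) neg_innh_add (fun Y X Y' => innh_act X Y Y'),
      swap_inner, wedge_zsmul_left _ neg_innh_add, wedge_reindex_left, wedge_neg, reindex_zsmul,
      reindex_reindex, reindex_neg, smul_neg, ← neg_smul, pow_succ, mul_neg_one, mul_comm t₁ k]
  refine ⟨?_, by rw [second_identity, real_smul]⟩
  rw [swap_outer, real_smul, reindex_zsmul, reindex_reindex, smul_smul, ← pow_add,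
    second_identity,
    show t₂ * (k + t₁) + k * t₁ + 1 + t₂ * (k + t₁) = k * t₁ + 1 + 2 * (t₂ * (k + t₁)) by ring,
    pow_add _ (k * t₁ + 1), pow_mul, neg_one_sq, one_pow, mul_one]
end

section
/- Let (l, h, g; β, α, ▷, {,}) be a differential 2-crossed module and define the induced action Y ▷' Z := −{β(Z), Y} of h on l. Then ▷' acts by derivations of the bracket of l: for all Y ∈ h and Z₁, Z₂ ∈ l, Y ▷' [Z₁, Z₂] = [Y ▷' Z₁, Z₂] + [Z₁, Y ▷' Z₂]. -/
/-!
Expand `{[β Z₁, β Z₂], Y}` with the bracket rule for the first slot of the Peiffer lifting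
(the `α ∘ β = 0` terms drop out), then rewrite both resulting terms `{β Zᵢ, [β Zⱼ, Y]}` with the
rule for the second slot together with `[Z₁, Z₂] = {β Z₁, β Z₂}`. Since `{β [Z₂, Z₁], Y}` is
`-{β [Z₁, Z₂], Y}`, what remains is the Leibniz rule for `Y ▷' ·`.
-/

section PeifferLifting

variable {l h : Type*} [LieRing l] [LieAlgebra ℝ l] [LieRing h] [LieAlgebra ℝ h]
  (β : l →ₗ[ℝ] h) (P : h →ₗ[ℝ] h →ₗ[ℝ] l)

theorem peiffer_beta_beta_lie
    (P_bracketL : ∀ Z₁ Z₂ : l, ⁅Z₁, Z₂⁆ = P (β Z₁) (β Z₂))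
    (P_bracketH₂ : ∀ Y₁ Y₂ Y₃ : h,
      P Y₁ ⁅Y₂, Y₃⁆ = P (β (P Y₁ Y₂)) Y₃ - P (β (P Y₁ Y₃)) Y₂)
    (Y : h) (Z₁ Z₂ : l) :
    P (β Z₁) ⁅β Z₂, Y⁆ = P (β ⁅Z₁, Z₂⁆) Y - ⁅P (β Z₁) Y, Z₂⁆ := by
  rw [P_bracketH₂, ← P_bracketL, ← P_bracketL]

theorem peiffer_lie_beta_beta {g : Type*} [LieRing g] [LieAlgebra ℝ g]
    (α : h →ₗ[ℝ] g) (αβ : ∀ Z : l, α (β Z) = 0) (actL : g →ₗ[ℝ] l →ₗ[ℝ] l)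
    (P_bracketH₁ : ∀ Y₁ Y₂ Y₃ : h,
      P ⁅Y₁, Y₂⁆ Y₃ = actL (α Y₁) (P Y₂ Y₃) + P Y₁ ⁅Y₂, Y₃⁆
        - actL (α Y₂) (P Y₁ Y₃) - P Y₂ ⁅Y₁, Y₃⁆)
    (Y : h) (Z₁ Z₂ : l) :
    P ⁅β Z₁, β Z₂⁆ Y = P (β Z₁) ⁅β Z₂, Y⁆ - P (β Z₂) ⁅β Z₁, Y⁆ := by
  simp [P_bracketH₁, αβ]

theorem peiffer_beta_lie {g : Type*} [LieRing g] [LieAlgebra ℝ g]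
    (β_bracket : ∀ Z Z' : l, β ⁅Z, Z'⁆ = ⁅β Z, β Z'⁆)
    (α : h →ₗ[ℝ] g) (αβ : ∀ Z : l, α (β Z) = 0) (actL : g →ₗ[ℝ] l →ₗ[ℝ] l)
    (P_bracketL : ∀ Z₁ Z₂ : l, ⁅Z₁, Z₂⁆ = P (β Z₁) (β Z₂))
    (P_bracketH₁ : ∀ Y₁ Y₂ Y₃ : h,
      P ⁅Y₁, Y₂⁆ Y₃ = actL (α Y₁) (P Y₂ Y₃) + P Y₁ ⁅Y₂, Y₃⁆
        - actL (α Y₂) (P Y₁ Y₃) - P Y₂ ⁅Y₁, Y₃⁆)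
    (P_bracketH₂ : ∀ Y₁ Y₂ Y₃ : h,
      P Y₁ ⁅Y₂, Y₃⁆ = P (β (P Y₁ Y₂)) Y₃ - P (β (P Y₁ Y₃)) Y₂)
    (Y : h) (Z₁ Z₂ : l) :
    P (β ⁅Z₁, Z₂⁆) Y = ⁅P (β Z₁) Y, Z₂⁆ + ⁅Z₁, P (β Z₂) Y⁆ := by
  have expand := peiffer_lie_beta_beta β P α αβ actL P_bracketH₁ Y Z₁ Z₂
  rw [← β_bracket, peiffer_beta_beta_lie β P P_bracketL P_bracketH₂,
    peiffer_beta_beta_lie β P P_bracketL P_bracketH₂] at expand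
  have swap : P (β ⁅Z₂, Z₁⁆) Y = -P (β ⁅Z₁, Z₂⁆) Y := by
    rw [← lie_skew, map_neg, map_neg, LinearMap.neg_apply]
  linear_combination (norm := module) -expand + swap + lie_skew Z₁ (P (β Z₂) Y)

end PeifferLifting

theorem inducedAction_derivation_general
    {l h g : Type*} [LieRing l] [LieAlgebra ℝ l] [LieRing h] [LieAlgebra ℝ h]
    [LieRing g] [LieAlgebra ℝ g]
    (β : l →ₗ[ℝ] h) (β_bracket : ∀ Z Z' : l, β ⁅Z, Z'⁆ = ⁅β Z, β Z'⁆)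
    (α : h →ₗ[ℝ] g)
    (αβ : ∀ Z : l, α (β Z) = 0)
    (actL : g →ₗ[ℝ] l →ₗ[ℝ] l)
    (P : h →ₗ[ℝ] h →ₗ[ℝ] l)
    (P_bracketL : ∀ Z₁ Z₂ : l, ⁅Z₁, Z₂⁆ = P (β Z₁) (β Z₂))
    (P_bracketH₁ : ∀ Y₁ Y₂ Y₃ : h,
      P ⁅Y₁, Y₂⁆ Y₃ = actL (α Y₁) (P Y₂ Y₃) + P Y₁ ⁅Y₂, Y₃⁆
        - actL (α Y₂) (P Y₁ Y₃) - P Y₂ ⁅Y₁, Y₃⁆)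
    (P_bracketH₂ : ∀ Y₁ Y₂ Y₃ : h,
      P Y₁ ⁅Y₂, Y₃⁆ = P (β (P Y₁ Y₂)) Y₃ - P (β (P Y₁ Y₃)) Y₂)
    : ∀ (Y : h) (Z₁ Z₂ : l),
      -(P (β ⁅Z₁, Z₂⁆) Y) = ⁅-(P (β Z₁) Y), Z₂⁆ + ⁅Z₁, -(P (β Z₂) Y)⁆ := by
  intro Y Z₁ Z₂
  rw [peiffer_beta_lie β P β_bracket α αβ actL P_bracketL P_bracketH₁ P_bracketH₂,
    neg_lie, lie_neg, neg_add]

/-- In a differential 2-crossed module, the induced action `Y ▷' Z := -{β(Z), Y}` of `h`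
on `l` acts by derivations: `Y ▷' [Z₁, Z₂] = [Y ▷' Z₁, Z₂] + [Z₁, Y ▷' Z₂]`. -/
theorem inducedAction_derivation
    {l h g : Type*} [LieRing l] [LieAlgebra ℝ l] [LieRing h] [LieAlgebra ℝ h]
    [LieRing g] [LieAlgebra ℝ g]
    (β : l →ₗ[ℝ] h) (β_bracket : ∀ Z Z' : l, β ⁅Z, Z'⁆ = ⁅β Z, β Z'⁆)
    (α : h →ₗ[ℝ] g) (α_bracket : ∀ Y Y' : h, α ⁅Y, Y'⁆ = ⁅α Y, α Y'⁆)
    (αβ : ∀ Z : l, α (β Z) = 0)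
    (actH : g →ₗ[ℝ] h →ₗ[ℝ] h) (actL : g →ₗ[ℝ] l →ₗ[ℝ] l)
    (actH_der : ∀ (X : g) (Y₁ Y₂ : h),
      actH X ⁅Y₁, Y₂⁆ = ⁅actH X Y₁, Y₂⁆ + ⁅Y₁, actH X Y₂⁆)
    (actL_der : ∀ (X : g) (Z₁ Z₂ : l),
      actL X ⁅Z₁, Z₂⁆ = ⁅actL X Z₁, Z₂⁆ + ⁅Z₁, actL X Z₂⁆)
    (actH_lie : ∀ (X₁ X₂ : g) (Y : h),
      actH ⁅X₁, X₂⁆ Y = actH X₁ (actH X₂ Y) - actH X₂ (actH X₁ Y))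
    (actL_lie : ∀ (X₁ X₂ : g) (Z : l),
      actL ⁅X₁, X₂⁆ Z = actL X₁ (actL X₂ Z) - actL X₂ (actL X₁ Z))
    (β_equiv : ∀ (X : g) (Z : l), β (actL X Z) = actH X (β Z))
    (α_equiv : ∀ (X : g) (Y : h), α (actH X Y) = ⁅X, α Y⁆)
    (P : h →ₗ[ℝ] h →ₗ[ℝ] l)
    (P_equiv : ∀ (X : g) (Y₁ Y₂ : h),
      actL X (P Y₁ Y₂) = P (actH X Y₁) Y₂ + P Y₁ (actH X Y₂))
    (P_beta : ∀ Y₁ Y₂ : h, β (P Y₁ Y₂) = ⁅Y₁, Y₂⁆ - actH (α Y₁) Y₂)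
    (P_bracketL : ∀ Z₁ Z₂ : l, ⁅Z₁, Z₂⁆ = P (β Z₁) (β Z₂))
    (P_bracketH₁ : ∀ Y₁ Y₂ Y₃ : h,
      P ⁅Y₁, Y₂⁆ Y₃ = actL (α Y₁) (P Y₂ Y₃) + P Y₁ ⁅Y₂, Y₃⁆
        - actL (α Y₂) (P Y₁ Y₃) - P Y₂ ⁅Y₁, Y₃⁆)
    (P_bracketH₂ : ∀ Y₁ Y₂ Y₃ : h,
      P Y₁ ⁅Y₂, Y₃⁆ = P (β (P Y₁ Y₂)) Y₃ - P (β (P Y₁ Y₃)) Y₂)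
    (P_six : ∀ (Y : h) (Z : l), P (β Z) Y + P Y (β Z) = - actL (α Y) Z)
    : ∀ (Y : h) (Z₁ Z₂ : l),
      -(P (β ⁅Z₁, Z₂⁆) Y) = ⁅-(P (β Z₁) Y), Z₂⁆ + ⁅Z₁, -(P (β Z₂) Y)⁆ :=
  inducedAction_derivation_general β β_bracket α αβ actL P P_bracketL P_bracketH₁ P_bracketH₂
end
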